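/- arXiv:2601.15520 — 6 statements merged into one kernel-verified Lean document; each statement's English description precedes it below -/
import Mathlib

section
/- Let G = (V,E) be a finite graph and π a GEO for G, and let C = (V_C, E_C) be a connected component of G. Set k_-^C = min{π^{−1}(v) : v ∈ V_C} and k_+^C = max{π^{−1}(v) : v ∈ V_C}. Then: (i) V_C = ⟦k_-^C, k_+^C⟧_π; (ii) for every v ∈ V_C there exists a π-good path from π(k_-^C) to v. Conversely, if π is an ordering of V such that (i) and (ii) hold for every connected component of G, then π is a GEO for G. -/
open MeasureTheory ProbabilityTheory Filter

namespace PrimBip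

/-- Vertex set of the complete bipartite graph `K_{n_b,n_w}`:
black vertices are `Sum.inl`, white vertices are `Sum.inr`. -/
abbrev V (nb nw : ℕ) := Fin nb ⊕ Fin nw

def blacks (nb nw : ℕ) : Set (V nb nw) := Set.range Sum.inl

def whites (nb nw : ℕ) : Set (V nb nw) := Set.range Sum.inr

/-- Edge weights extended to pairs of vertices; non-edges get the junk value `2`. -/
def wt {nb nw : ℕ} (W : Fin nb → Fin nw → ℝ) : V nb nw → V nb nw → ℝ
  | Sum.inl b, Sum.inr w => W b w
  | Sum.inr w, Sum.inl b => W b w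
  | _, _ => 2

lemma wt_symm {nb nw : ℕ} (W : Fin nb → Fin nw → ℝ) (v v' : V nb nw) :
    wt W v v' = wt W v' v := by
  cases v <;> cases v' <;> rfl

/-- The a.s. properties of i.i.d. uniform edge weights: all weights lie in `(0,1)`
and are pairwise distinct. -/
def GoodWeights {nb nw : ℕ} (W : Fin nb → Fin nw → ℝ) : Prop :=
  (∀ b w, W b w ∈ Set.Ioo (0:ℝ) 1) ∧
    Function.Injective (fun bw : Fin nb × Fin nw => W bw.1 bw.2)

/-- `σ` (0-indexed: `σ 0` is the first vertex) is a Prim sequence for the weights `W`: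
it enumerates all the vertices, and at each step `k ≥ 1` the vertex `σ k` is an endpoint
of the minimal-weight edge joining `{σ 0, …, σ (k-1)}` to its complement. -/
def IsPrimSeq {nb nw : ℕ} (W : Fin nb → Fin nw → ℝ) (σ : ℕ → V nb nw) : Prop :=
  σ '' Set.Iio (nb + nw) = Set.univ ∧ Set.InjOn σ (Set.Iio (nb + nw)) ∧
    ∀ k, 0 < k → k < nb + nw →
      ∃ j < k, ∀ a b, a < k → k ≤ b → b < nb + nw →
        wt W (σ j) (σ k) ≤ wt W (σ a) (σ b)

/-- The Bernoulli bond percolation graph `G(n_b,n_w,p)`: keep exactly the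
(bipartite) edges of weight `≤ p`. -/
def percGraph {nb nw : ℕ} (W : Fin nb → Fin nw → ℝ) (p : ℝ) : SimpleGraph (V nb nw) where
  Adj v v' := v ≠ v' ∧ wt W v v' ≤ p
  symm := ⟨fun _ _ h => ⟨h.1.symm, by rw [wt_symm]; exact h.2⟩⟩
  loopless := ⟨fun _ h => h.1 rfl⟩

/-- 1-neighbourhood of a set of vertices. -/
def nbhd {α : Type*} (G : SimpleGraph α) (A : Set α) : Set α :=
  {v | v ∉ A ∧ ∃ a ∈ A, G.Adj a v}

/-- 2-neighbourhood of a set of vertices. -/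
def nbhd2 {α : Type*} (G : SimpleGraph α) (A : Set α) : Set α :=
  nbhd G (nbhd G A) \ A

/-- `Sig σ i` = `Σ(i)`, the set of the first `i` vertices in the Prim ranking. -/
def Sig {nb nw : ℕ} (σ : ℕ → V nb nw) (i : ℕ) : Set (V nb nw) := σ '' Set.Iio i

def SigB {nb nw : ℕ} (σ : ℕ → V nb nw) (i : ℕ) : Set (V nb nw) := Sig σ i ∩ blacks nb nw

def SigW {nb nw : ℕ} (σ : ℕ → V nb nw) (i : ℕ) : Set (V nb nw) := Sig σ i ∩ whites nb nw

/-- `tb σ k` = `τ^b_k`, the (1-based) Prim rank of the `k`-th black vertex. -/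
noncomputable def tb {nb nw : ℕ} (σ : ℕ → V nb nw) (k : ℕ) : ℕ :=
  sInf {i | (SigB σ i).ncard = k}

/-- The vertex of (1-based) Prim rank `i`. -/
def vat {nb nw : ℕ} (σ : ℕ → V nb nw) (i : ℕ) : V nb nw := σ (i - 1)

/-- `σ^b(k) = σ(τ^b_k)`, the `k`-th black vertex in Prim order. -/
noncomputable def sigb {nb nw : ℕ} (σ : ℕ → V nb nw) (k : ℕ) : V nb nw := vat σ (tb σ k)

/-- 0-based Prim rank of a vertex. -/
noncomputable def rk0 {nb nw : ℕ} (σ : ℕ → V nb nw) (v : V nb nw) : ℕ := sInf {i | σ i = v}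

/-- A lead vertex: the vertex of lowest Prim rank in its connected component of `G`. -/
def isLead {nb nw : ℕ} (G : SimpleGraph (V nb nw)) (σ : ℕ → V nb nw) (v : V nb nw) : Prop :=
  ∀ u, G.Reachable v u → rk0 σ v ≤ rk0 σ u

/-- A root vertex: a black vertex of lowest Prim rank among the black vertices of
its connected component of `G`. -/
def isRoot {nb nw : ℕ} (G : SimpleGraph (V nb nw)) (σ : ℕ → V nb nw) (v : V nb nw) : Prop :=
  v ∈ blacks nb nw ∧ ∀ u ∈ blacks nb nw, G.Reachable v u → rk0 σ v ≤ rk0 σ u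

/-- `𝒥^w_k`: the white lead vertices among `Σ^w(τ^b_k)`. -/
def Jw {nb nw : ℕ} (G : SimpleGraph (V nb nw)) (σ : ℕ → V nb nw) (k : ℕ) : Set (V nb nw) :=
  {v | v ∈ SigW σ (tb σ k) ∧ isLead G σ v}

/-- `ℐ^b_k`: the root vertices among `Σ^b(τ^b_k)`. -/
def Ib {nb nw : ℕ} (G : SimpleGraph (V nb nw)) (σ : ℕ → V nb nw) (k : ℕ) : Set (V nb nw) :=
  {v | v ∈ SigB σ (tb σ k) ∧ isRoot G σ v}

noncomputable def Jwc {nb nw : ℕ} (G : SimpleGraph (V nb nw)) (σ : ℕ → V nb nw) (k : ℕ) : ℕ :=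
  (Jw G σ k).ncard

noncomputable def Ibc {nb nw : ℕ} (G : SimpleGraph (V nb nw)) (σ : ℕ → V nb nw) (k : ℕ) : ℕ :=
  (Ib G σ k).ncard

/-- `𝒦^w_k`: the pool of white vertices available for discovery at step `k`. -/
noncomputable def Kw {nb nw : ℕ} (G : SimpleGraph (V nb nw)) (σ : ℕ → V nb nw) :
    ℕ → Set (V nb nw)
  | 0 => ∅
  | 1 => whites nb nw \ SigW σ (tb σ 1)
  | (k+2) => Kw G σ (k+1) \ ((nbhd G {sigb σ (k+1)} ∩ Kw G σ (k+1)) ∪ SigW σ (tb σ (k+2)))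

/-- `𝒪^w_k = N(σ^b(k)) ∩ 𝒦^w_k`. -/
noncomputable def Ow {nb nw : ℕ} (G : SimpleGraph (V nb nw)) (σ : ℕ → V nb nw) (k : ℕ) :
    Set (V nb nw) :=
  nbhd G {sigb σ k} ∩ Kw G σ k

/-- Auxiliary recursion: `(ObAux k).1 = ∪_{j ∈ [k]} 𝒪^b_j` and `(ObAux k).2 = 𝒪^b_k`. -/
noncomputable def ObAux {nb nw : ℕ} (G : SimpleGraph (V nb nw)) (σ : ℕ → V nb nw) :
    ℕ → Set (V nb nw) × Set (V nb nw)
  | 0 => (∅, ∅)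
  | (k+1) =>
    let c := (ObAux G σ k).1
    let o := nbhd2 G {sigb σ (k+1)} ∩ (blacks nb nw \ (c ∪ SigB σ (tb σ (k+1))))
    (c ∪ o, o)

/-- `𝒪^b_k`, the 2-neighbourhood discovered at step `k`. -/
noncomputable def Ob {nb nw : ℕ} (G : SimpleGraph (V nb nw)) (σ : ℕ → V nb nw) (k : ℕ) :
    Set (V nb nw) :=
  (ObAux G σ k).2

/-- `𝒦^b_k = V^b ∖ (∪_{j ≤ k-1} 𝒪^b_j ∪ Σ^b(τ^b_k))`. -/
noncomputable def Kb {nb nw : ℕ} (G : SimpleGraph (V nb nw)) (σ : ℕ → V nb nw) (k : ℕ) :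
    Set (V nb nw) :=
  blacks nb nw \ ((ObAux G σ (k-1)).1 ∪ SigB σ (tb σ k))

noncomputable def Owc {nb nw : ℕ} (G : SimpleGraph (V nb nw)) (σ : ℕ → V nb nw) (k : ℕ) : ℕ :=
  (Ow G σ k).ncard

noncomputable def Obc {nb nw : ℕ} (G : SimpleGraph (V nb nw)) (σ : ℕ → V nb nw) (k : ℕ) : ℕ :=
  (Ob G σ k).ncard

noncomputable def Kwc {nb nw : ℕ} (G : SimpleGraph (V nb nw)) (σ : ℕ → V nb nw) (k : ℕ) : ℕ :=
  (Kw G σ k).ncard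

noncomputable def Kbc {nb nw : ℕ} (G : SimpleGraph (V nb nw)) (σ : ℕ → V nb nw) (k : ℕ) : ℕ :=
  (Kb G σ k).ncard

/-- `S^w_k = Σ_{j ∈ [k]} O^w_j`. -/
noncomputable def Swk {nb nw : ℕ} (G : SimpleGraph (V nb nw)) (σ : ℕ → V nb nw) (k : ℕ) : ℕ :=
  ∑ j ∈ Finset.range k, Owc G σ (j+1)

/-- `S^b_k = Σ_{j ∈ [k]} O^b_j`. -/
noncomputable def Sbk {nb nw : ℕ} (G : SimpleGraph (V nb nw)) (σ : ℕ → V nb nw) (k : ℕ) : ℕ :=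
  ∑ j ∈ Finset.range k, Obc G σ (j+1)

/-- `R(k) = |Σ^w(τ^b_k)| − J^w(k)`. -/
noncomputable def Rfn {nb nw : ℕ} (G : SimpleGraph (V nb nw)) (σ : ℕ → V nb nw) (k : ℕ) : ℤ :=
  ((SigW σ (tb σ k)).ncard : ℤ) - Jwc G σ k

/-- `Δ_k = Σ_{1 ≤ i ≤ O^w_k} |𝒩_i| = |N(𝒪^w_k) ∩ 𝒦^b_k|`. -/
noncomputable def Delta {nb nw : ℕ} (G : SimpleGraph (V nb nw)) (σ : ℕ → V nb nw) (k : ℕ) : ℕ :=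
  (nbhd G (Ow G σ k) ∩ Kb G σ k).ncard

/-- `𝒜^w_k = {σ(i) : i > τ^b_k, σ(i) ∈ ∪_{j ∈ [k−1]} 𝒪^w_j}`. -/
noncomputable def Aw {nb nw : ℕ} (G : SimpleGraph (V nb nw)) (σ : ℕ → V nb nw) (k : ℕ) :
    Set (V nb nw) :=
  (⋃ j ∈ Finset.range (k-1), Ow G σ (j+1)) \ Sig σ (tb σ k)

/-- `𝒜^b_k = (∪_{j ∈ [k]} 𝒪^b_j) ∖ Σ^b(τ^b_k)`. -/
noncomputable def Ab {nb nw : ℕ} (G : SimpleGraph (V nb nw)) (σ : ℕ → V nb nw) (k : ℕ) :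
    Set (V nb nw) :=
  (⋃ j ∈ Finset.range k, Ob G σ (j+1)) \ SigB σ (tb σ k)

/-- The interval `⟦i,j⟧_π` of vertices of π-rank between `i` and `j`. -/
def geoInterval {α : Type*} {m : ℕ} (π : Fin m ≃ α) (i j : Fin m) : Set α :=
  {v | i ≤ π.symm v ∧ π.symm v ≤ j}

/-- `π` is a graph exploration order (GEO) for `G`. -/
def IsGEO {α : Type*} {m : ℕ} (G : SimpleGraph α) (π : Fin m ≃ α) : Prop :=
  ∀ i j : Fin m, i ≤ j → G.Reachable (π i) (π j) →
    ∃ i', i' ≤ i ∧ (G.induce (geoInterval π i' j)).Connected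

/-- A `π`-good path from `u` to `v`: a path along which the π-ranks strictly increase. -/
def IsGoodPath {α : Type*} {m : ℕ} (G : SimpleGraph α) (π : Fin m ≃ α) (u v : α) : Prop :=
  ∃ (k : ℕ) (w : ℕ → α), w 0 = u ∧ w k = v ∧ (∀ i < k, G.Adj (w i) (w (i+1))) ∧
    StrictMonoOn (fun i => π.symm (w i)) (Set.Iic k)

/-- GEO for a 0-indexed enumeration `σ` of the `n` vertices. -/
def IsGEOSeq {α : Type*} (G : SimpleGraph α) (n : ℕ) (σ : ℕ → α) : Prop :=
  ∀ i j, i ≤ j → j < n → G.Reachable (σ i) (σ j) →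
    ∃ i' ≤ i, (G.induce (σ '' Set.Icc i' j)).Connected

/-- `pew W σ i` = `U_{e_i}`, the weight of the `i`-th Prim edge: the minimal weight
over the cut between the first `i` vertices and the rest. -/
noncomputable def pew {nb nw : ℕ} (W : Fin nb → Fin nw → ℝ) (σ : ℕ → V nb nw) (i : ℕ) : ℝ :=
  sInf {x | ∃ a b, a < i ∧ i ≤ b ∧ b < nb + nw ∧ x = wt W (σ a) (σ b)}

/-- The sequence `J_j` of Prim ranks at which new components start. -/
noncomputable def Jseq {nb nw : ℕ} (W : Fin nb → Fin nw → ℝ) (σ : ℕ → V nb nw) (p : ℝ) :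
    ℕ → ℕ
  | 0 => 0
  | (j+1) => sInf ({i | Jseq W σ p j < i ∧ i < nb + nw ∧ p < pew W σ i} ∪ {nb + nw})

/-- `m = inf{j ≥ 1 : J_j = n}`, the number of connected components. -/
noncomputable def mComp {nb nw : ℕ} (W : Fin nb → Fin nw → ℝ) (σ : ℕ → V nb nw) (p : ℝ) : ℕ :=
  sInf {j | 1 ≤ j ∧ Jseq W σ p j = nb + nw}

/-- The binomial probability mass function. -/
noncomputable def binomPMF (m : ℕ) (p : ℝ) (j : ℕ) : ℝ :=
  (m.choose j : ℝ) * p ^ j * (1 - p) ^ (m - j)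

/-- The pmf of the distribution `𝒟(m, k, p)`: the law of `X_1 + ⋯ + X_k` where
`X_1 ~ Bin(m,p)` and, given `X_1,…,X_i`, `X_{i+1} ~ Bin(m − Σ_{j≤i} X_j, p)`. -/
noncomputable def Dpmf : ℕ → ℕ → ℝ → ℕ → ℝ
  | _, 0, _, j => if j = 0 then 1 else 0
  | m, (k+1), p, j => ∑ i ∈ Finset.range (j+1), binomPMF m p i * Dpmf (m - i) k p (j - i)

end PrimBip

open PrimBip

/-!
If `π` is a GEO and `v ≠ π kmin` lies in `C`, the connected window `⟦i', π⁻¹ v⟧` supplied for the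
pair `(kmin, π⁻¹ v)` contains `π kmin`, so `v` has a neighbour of smaller rank, necessarily in `C`;
descending along such neighbours and reversing gives a `π`-good path. Conversely, a `π`-good path
from `π kmin` to `v` never leaves the rank window `⟦kmin, π⁻¹ v⟧`, so these paths connect every
window `⟦kmin, j⟧` with `j ≤ kmax`.
-/

namespace PrimBip

open SimpleGraph

variable {α : Type*} {G : SimpleGraph α} {m : ℕ} {π : Fin m ≃ α}

theorem reachable_induce_of_adj_chain {s : Set α} {w : ℕ → α} {k : ℕ}
    (hadj : ∀ i < k, G.Adj (w i) (w (i + 1))) (hmem : ∀ i ≤ k, w i ∈ s) :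
    (G.induce s).Reachable ⟨w 0, hmem 0 k.zero_le⟩ ⟨w k, hmem k le_rfl⟩ := by
  induction k with
  | zero => rfl
  | succ k ih =>
    exact (ih (fun i hi => hadj i (by omega)) (fun i hi => hmem i (by omega))).trans
      (Adj.reachable (hadj k k.lt_succ_self))

theorem subset_supp_of_induce_connected {s : Set α} (hs : (G.induce s).Connected) {x : α}
    (hx : x ∈ s) : s ⊆ (G.connectedComponentMk x).supp := fun v hv =>
  ConnectedComponent.sound
    ((hs.preconnected ⟨v, hv⟩ ⟨x, hx⟩).map (Embedding.induce s).toHom)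

theorem IsGoodPath.refl (u : α) : IsGoodPath G π u u :=
  ⟨0, fun _ => u, rfl, rfl, fun _ hi => absurd hi (Nat.not_lt_zero _),
    fun a ha b hb hab => by simp only [Set.mem_Iic] at ha hb; omega⟩

theorem IsGoodPath.snoc {u v x : α} (h : IsGoodPath G π u v) (hadj : G.Adj v x)
    (hlt : π.symm v < π.symm x) : IsGoodPath G π u x := by
  obtain ⟨k, w, hw0, hwk, hwadj, hwmono⟩ := h
  refine ⟨k + 1, fun i => if i ≤ k then w i else x, by simpa using hw0, by simp,
    fun i hi => ?_, strictMonoOn_Iic_of_lt_succ fun i hi => ?_⟩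
  · rcases Nat.lt_succ_iff_lt_or_eq.1 hi with hi | rfl
    · simpa [hi.le, hi] using hwadj i hi
    · simpa [hwk] using hadj
  rw [Order.succ_eq_add_one]
  rcases Nat.lt_succ_iff_lt_or_eq.1 hi with hi | rfl
  · simpa [hi.le, hi] using
      hwmono (Set.mem_Iic.2 hi.le) (Set.mem_Iic.2 hi) i.lt_succ_self
  · simpa [hwk] using hlt

theorem IsGoodPath.induce_reachable {u v : α} {s : Set α} (h : IsGoodPath G π u v)
    (hs : geoInterval π (π.symm u) (π.symm v) ⊆ s) (hu : u ∈ s) (hv : v ∈ s) :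
    (G.induce s).Reachable ⟨u, hu⟩ ⟨v, hv⟩ := by
  obtain ⟨k, w, rfl, rfl, hadj, hmono⟩ := h
  exact reachable_induce_of_adj_chain hadj fun i hi =>
    hs ⟨hmono.monotoneOn (Set.mem_Iic.2 k.zero_le) (Set.mem_Iic.2 hi) i.zero_le,
      hmono.monotoneOn (Set.mem_Iic.2 hi) Set.self_mem_Iic hi⟩

section Component

variable {c : G.ConnectedComponent} {kmin : Fin m}

theorem supp_subset_geoInterval {kmax : Fin m} (hmin : IsLeast {k | π k ∈ c.supp} kmin)
    (hmax : IsGreatest {k | π k ∈ c.supp} kmax) : c.supp ⊆ geoInterval π kmin kmax :=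
  fun v hv => ⟨hmin.2 (by simpa using hv), hmax.2 (by simpa using hv)⟩

theorem IsGEO.geoInterval_subset_supp (hπ : IsGEO G π) (hmin : IsLeast {k | π k ∈ c.supp} kmin)
    {j : Fin m} (hj : π j ∈ c.supp) : geoInterval π kmin j ⊆ c.supp := by
  obtain ⟨i', hi', hconn⟩ := hπ kmin j (hmin.2 hj) (c.reachable_of_mem_supp hmin.1 hj)
  have hjmem : π j ∈ geoInterval π i' j := by simpa [geoInterval] using hi'.trans (hmin.2 hj)
  rw [← (c.mem_supp_iff _).1 hj]
  exact fun v hv => subset_supp_of_induce_connected hconn hjmem ⟨hi'.trans hv.1, hv.2⟩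

theorem IsGEO.exists_adj_rank_lt (hπ : IsGEO G π) (hmin : IsLeast {k | π k ∈ c.supp} kmin)
    {v : α} (hv : v ∈ c.supp) (hne : v ≠ π kmin) : ∃ u, G.Adj u v ∧ π.symm u < π.symm v := by
  have hle : kmin ≤ π.symm v := hmin.2 (by simpa using hv)
  obtain ⟨i', hi', hconn⟩ := hπ kmin (π.symm v) hle
    (by simpa using c.reachable_of_mem_supp hmin.1 hv)
  set s := geoInterval π i' (π.symm v)
  have hvs : v ∈ s := ⟨hi'.trans hle, le_rfl⟩
  have hks : π kmin ∈ s := by simpa [s, geoInterval] using ⟨hi', hle⟩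
  have : Nontrivial s := ⟨⟨v, hvs⟩, ⟨π kmin, hks⟩, fun h => hne (congrArg Subtype.val h)⟩
  obtain ⟨⟨u, hus⟩, hvu⟩ := hconn.preconnected.exists_adj_of_nontrivial ⟨v, hvs⟩
  exact ⟨u, hvu.symm, hus.2.lt_of_ne fun h => hvu.ne (Subtype.ext (π.symm.injective h).symm)⟩

theorem IsGEO.isGoodPath (hπ : IsGEO G π) (hmin : IsLeast {k | π k ∈ c.supp} kmin)
    {v : α} (hv : v ∈ c.supp) : IsGoodPath G π (π kmin) v := by
  induction v using (InvImage.wf (fun v => π.symm v) wellFounded_lt).induction with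
  | _ v ih =>
    by_cases hne : v = π kmin
    · exact hne ▸ .refl _
    obtain ⟨u, huv, hlt⟩ := hπ.exists_adj_rank_lt hmin hv hne
    exact (ih u hlt ((c.mem_supp_congr_adj huv).2 hv)).snoc huv hlt

theorem induce_geoInterval_connected {kmax j : Fin m} (hsupp : c.supp = geoInterval π kmin kmax)
    (hgood : ∀ v ∈ c.supp, IsGoodPath G π (π kmin) v) (hj : kmin ≤ j) (hjmax : j ≤ kmax) :
    (G.induce (geoInterval π kmin j)).Connected := by
  have hk : π kmin ∈ geoInterval π kmin j := by simpa [geoInterval] using hj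
  refine (connected_iff_exists_forall_reachable _).2 ⟨⟨π kmin, hk⟩, fun ⟨v, hv⟩ => ?_⟩
  refine (hgood v (hsupp ▸ ⟨hv.1, hv.2.trans hjmax⟩)).induce_reachable ?_ hk hv
  exact fun x hx => ⟨by simpa using hx.1, hx.2.trans hv.2⟩

end Component

theorem isGEO_of_forall_component
    (H : ∀ (c : G.ConnectedComponent) (kmin kmax : Fin m),
      IsLeast {k : Fin m | π k ∈ c.supp} kmin → IsGreatest {k : Fin m | π k ∈ c.supp} kmax →
        (c.supp = geoInterval π kmin kmax ∧ ∀ v ∈ c.supp, IsGoodPath G π (π kmin) v)) :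
    IsGEO G π := by
  intro i j hij hreach
  set S := {k : Fin m | π k ∈ (G.connectedComponentMk (π i)).supp}
  have hi : i ∈ S := rfl
  have hjS : j ∈ S := (ConnectedComponent.sound hreach).symm
  have hS : S.toFinite.toFinset.Nonempty := ⟨i, by simpa using hi⟩
  have hmin : IsLeast S (S.toFinite.toFinset.min' hS) := by
    simpa using S.toFinite.toFinset.isLeast_min' hS
  have hmax : IsGreatest S (S.toFinite.toFinset.max' hS) := by
    simpa using S.toFinite.toFinset.isGreatest_max' hS
  obtain ⟨hsupp, hgood⟩ := H _ _ _ hmin hmax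
  exact ⟨_, hmin.2 hi,
    induce_geoInterval_connected hsupp hgood ((hmin.2 hi).trans hij) (hmax.2 hjS)⟩

end PrimBip

theorem statement_2_general {α : Type*} (G : SimpleGraph α) {m : ℕ} (π : Fin m ≃ α)
    (c : G.ConnectedComponent) (kmin kmax : Fin m)
    (hmin : IsLeast {k : Fin m | π k ∈ c.supp} kmin)
    (hmax : IsGreatest {k : Fin m | π k ∈ c.supp} kmax) :
    (IsGEO G π →
      (c.supp = geoInterval π kmin kmax ∧ ∀ v ∈ c.supp, IsGoodPath G π (π kmin) v)) ∧
    ((∀ (c' : G.ConnectedComponent) (kmin' kmax' : Fin m),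
        IsLeast {k : Fin m | π k ∈ c'.supp} kmin' →
        IsGreatest {k : Fin m | π k ∈ c'.supp} kmax' →
        (c'.supp = geoInterval π kmin' kmax' ∧
          ∀ v ∈ c'.supp, IsGoodPath G π (π kmin') v)) →
      IsGEO G π) :=
  ⟨fun hπ => ⟨(supp_subset_geoInterval hmin hmax).antisymm
      (hπ.geoInterval_subset_supp hmin hmax.1), fun _ hv => hπ.isGoodPath hmin hv⟩,
    isGEO_of_forall_component⟩

/-- Lemma `lem: prim`: for a GEO `π` and a connected component `C` of `G`
with lowest rank `kmin` and highest rank `kmax`, (i) the vertex set of `C` is the rank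
interval `⟦kmin, kmax⟧_π`, and (ii) every vertex of `C` is reachable from `π kmin` by a
`π`-good path. Conversely, any ordering satisfying (i) and (ii) for every connected
component is a GEO. -/
theorem statement_2 {α : Type*} [Fintype α] (G : SimpleGraph α) {m : ℕ} (π : Fin m ≃ α)
    (c : G.ConnectedComponent) (kmin kmax : Fin m)
    (hmin : IsLeast {k : Fin m | π k ∈ c.supp} kmin)
    (hmax : IsGreatest {k : Fin m | π k ∈ c.supp} kmax) :
    (IsGEO G π →
      (c.supp = geoInterval π kmin kmax ∧ ∀ v ∈ c.supp, IsGoodPath G π (π kmin) v)) ∧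
    ((∀ (c' : G.ConnectedComponent) (kmin' kmax' : Fin m),
        IsLeast {k : Fin m | π k ∈ c'.supp} kmin' →
        IsGreatest {k : Fin m | π k ∈ c'.supp} kmax' →
        (c'.supp = geoInterval π kmin' kmax' ∧
          ∀ v ∈ c'.supp, IsGoodPath G π (π kmin') v)) →
      IsGEO G π) :=
  statement_2_general G π c kmin kmax hmin hmax
end

section
/- Let p ∈ (0,1). Define J_0 = 0, and for j ≥ 1, J_j = (inf{i > J_{j−1} : U_{e_i} > p}) ∧ n, and m = inf{j ≥ 1 : J_j = n}. Then almost surely the vertex sets of the connected components of G(n_b,n_w,p) are exactly the sets C_j(p) = {σ(i) : J_{j−1}+1 ≤ i ≤ J_j} for 1 ≤ j ≤ m, and the Prim sequence σ : [n] → V_n is a GEO for G(n_b,n_w,p). -/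
open MeasureTheory ProbabilityTheory Filter

open PrimBip

/-! Prim's algorithm attaches `σ k` to `{σ 0, …, σ (k-1)}` through the cheapest edge of the
cut, of weight `pew W σ k`. If `pew W σ t > p`, no edge of `G(n_b,n_w,p)` leaves
`{σ 0, …, σ (t-1)}`, so this set is a union of components; if `pew W σ k ≤ p`, the Prim edge
of `σ k` is an edge of `G(n_b,n_w,p)` to an earlier vertex. Hence the components are the runs
of consecutive Prim ranks cut at the ranks `J_j` where `pew > p`, and every rank interval
starting at the beginning of a run induces a connected graph, which is the GEO property. -/

namespace SimpleGraph

variable {α : Type*} {G : SimpleGraph α}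

lemma Reachable.mem_of_adj_closed {S : Set α} (hS : ∀ u v, u ∈ S → G.Adj u v → v ∈ S)
    {u v : α} (h : G.Reachable u v) (hu : u ∈ S) : v ∈ S := by
  rw [reachable_iff_reflTransGen] at h
  induction h with
  | refl => exact hu
  | tail _ hadj ih => exact hS _ _ ih hadj

lemma induce_image_Icc_connected (f : ℕ → α) {a b : ℕ} (hab : a ≤ b)
    (hparent : ∀ k, a < k → k ≤ b → ∃ i, a ≤ i ∧ i < k ∧ G.Adj (f i) (f k)) :
    (G.induce (f '' Set.Icc a b)).Connected := by
  induction b, hab using Nat.le_induction with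
  | base =>
    rw [Set.Icc_self, Set.image_singleton, induce_singleton_eq_top]
    exact connected_top
  | succ b hab ih =>
    obtain ⟨i, hai, hib, hadj⟩ := hparent (b + 1) (by omega) le_rfl
    rw [← Set.insert_Icc_right_eq_Icc_add_one (by omega), Set.image_insert_eq, Set.insert_eq]
    have hsingle : (G.induce {f (b + 1)}).Preconnected := by
      rw [induce_singleton_eq_top]; exact preconnected_top
    exact connected_induce_union hsingle
      (ih fun k hak hkb => hparent k hak (by omega)).preconnected rfl
      ⟨i, ⟨hai, by omega⟩, rfl⟩ hadj.symm

end SimpleGraph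

namespace PrimBip

open SimpleGraph

variable {nb nw : ℕ} {W : Fin nb → Fin nw → ℝ} {σ : ℕ → V nb nw} {p : ℝ}

lemma wt_nonneg (hW : GoodWeights W) (u v : V nb nw) : 0 ≤ wt W u v := by
  rcases u with b | w <;> rcases v with b' | w'
  · norm_num [wt]
  · exact (hW.1 b w').1.le
  · exact (hW.1 b' w).1.le
  · norm_num [wt]

lemma pew_le_wt (hW : GoodWeights W) {k a b : ℕ} (ha : a < k) (hkb : k ≤ b)
    (hb : b < nb + nw) : pew W σ k ≤ wt W (σ a) (σ b) :=
  csInf_le ⟨0, by rintro x ⟨a', b', -, -, -, rfl⟩; exact wt_nonneg hW _ _⟩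
    ⟨a, b, ha, hkb, hb, rfl⟩

lemma IsPrimSeq.exists_lt_eq (hσ : IsPrimSeq W σ) (v : V nb nw) :
    ∃ b < nb + nw, σ b = v :=
  (hσ.1 ▸ Set.mem_univ v : v ∈ σ '' Set.Iio (nb + nw))

lemma IsPrimSeq.exists_pew_eq_wt (hW : GoodWeights W) (hσ : IsPrimSeq W σ) {k : ℕ}
    (hk : 0 < k) (hkn : k < nb + nw) : ∃ i < k, pew W σ k = wt W (σ i) (σ k) := by
  obtain ⟨i, hik, hmin⟩ := hσ.2.2 k hk hkn
  refine ⟨i, hik, (pew_le_wt hW hik le_rfl hkn).antisymm ?_⟩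
  refine le_csInf ⟨_, i, k, hik, le_rfl, hkn, rfl⟩ ?_
  rintro x ⟨a, b, ha, hkb, hb, rfl⟩
  exact hmin a b ha hkb hb

lemma IsPrimSeq.lt_of_reachable (hW : GoodWeights W) (hσ : IsPrimSeq W σ) {t a b : ℕ}
    (ht : p < pew W σ t) (ha : a < t) (hb : b < nb + nw)
    (h : (percGraph W p).Reachable (σ a) (σ b)) : b < t := by
  have hclosed : ∀ u v, u ∈ σ '' Set.Iio t → (percGraph W p).Adj u v → v ∈ σ '' Set.Iio t := by
    rintro _ v ⟨a', ha', rfl⟩ hadj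
    obtain ⟨b', hb', rfl⟩ := hσ.exists_lt_eq v
    refine ⟨b', ?_, rfl⟩
    by_contra htb
    rw [Set.mem_Iio, not_lt] at htb
    linarith [pew_le_wt (σ := σ) hW ha' htb hb', hadj.2]
  obtain ⟨c, hct, hcb⟩ := h.mem_of_adj_closed hclosed ⟨a, ha, rfl⟩
  by_contra! htb
  have hc : c < nb + nw := lt_of_lt_of_le hct (htb.trans hb.le)
  exact absurd (hσ.2.1 hc hb hcb ▸ hct) (not_lt.mpr htb)

lemma IsPrimSeq.induce_image_Icc_connected (hW : GoodWeights W) (hσ : IsPrimSeq W σ)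
    {s j : ℕ} (hsj : s ≤ j) (hjn : j < nb + nw) (hs : s = 0 ∨ p < pew W σ s)
    (hgap : ∀ k, s < k → k ≤ j → pew W σ k ≤ p) :
    ((percGraph W p).induce (σ '' Set.Icc s j)).Connected := by
  refine SimpleGraph.induce_image_Icc_connected σ hsj fun k hsk hkj => ?_
  have hkn : k < nb + nw := by omega
  obtain ⟨i, hik, hpew⟩ := hσ.exists_pew_eq_wt hW (by omega) hkn
  have hsi : s ≤ i := by
    by_contra! his
    rcases hs with rfl | hs
    · omega
    · linarith [pew_le_wt (σ := σ) hW his hsk.le hkn, hgap k hsk hkj]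
  refine ⟨i, hsi, hik, fun hik' => ?_, hpew ▸ hgap k hsk hkj⟩
  exact absurd (hσ.2.1 (show i < nb + nw by omega) hkn hik') hik.ne

local notation "J" => Jseq W σ p

variable (W σ p) in
lemma Jseq_succ_mem (j : ℕ) :
    J (j + 1) ∈ {i | J j < i ∧ i < nb + nw ∧ p < pew W σ i} ∪ {nb + nw} :=
  Nat.sInf_mem ⟨nb + nw, Set.mem_union_right _ rfl⟩

variable (W σ p) in
lemma Jseq_le (j : ℕ) : J j ≤ nb + nw := by
  cases j with
  | zero => exact Nat.zero_le _
  | succ j => exact Nat.sInf_le (Set.mem_union_right _ rfl)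

lemma Jseq_lt_Jseq_succ {j : ℕ} (hj : J j < nb + nw) : J j < J (j + 1) := by
  rcases Jseq_succ_mem W σ p j with h | h
  · exact h.1
  · rw [Set.mem_singleton_iff.mp h]; exact hj

lemma Jseq_succ_eq_of_eq {j : ℕ} (hj : J j = nb + nw) : J (j + 1) = nb + nw := by
  rcases Jseq_succ_mem W σ p j with ⟨h1, h2, -⟩ | h
  · omega
  · exact h

lemma lt_pew_Jseq {j : ℕ} (hj : 1 ≤ j) (hjn : J j < nb + nw) : p < pew W σ (J j) := by
  obtain ⟨j, rfl⟩ := Nat.exists_eq_add_of_le' hj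
  rcases Jseq_succ_mem W σ p j with h | h
  · exact h.2.2
  · exact absurd (Set.mem_singleton_iff.mp h) hjn.ne

lemma pew_le_of_Jseq_lt_of_lt_Jseq_succ {j i : ℕ} (hi : J j < i) (hi' : i < J (j + 1)) :
    pew W σ i ≤ p := by
  by_contra! hp
  have : J (j + 1) ≤ i :=
    Nat.sInf_le (Set.mem_union_left _ ⟨hi, hi'.trans_le (Jseq_le W σ p _), hp⟩)
  omega

variable (W σ p) in
lemma Jseq_self : J (nb + nw) = nb + nw := by
  have key : ∀ j, j ≤ J j ∨ J j = nb + nw := by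
    intro j
    induction j with
    | zero => exact Or.inl le_rfl
    | succ j ih =>
      rcases (Jseq_le W σ p j).lt_or_eq with hlt | heq
      · rcases ih with ih | ih
        · exact Or.inl (by have := Jseq_lt_Jseq_succ hlt; omega)
        · omega
      · exact Or.inr (Jseq_succ_eq_of_eq heq)
  rcases key (nb + nw) with h | h
  · exact (Jseq_le W σ p _).antisymm h
  · exact h

variable (W σ p) in
lemma mComp_spec : 1 ≤ mComp W σ p ∧ J (mComp W σ p) = nb + nw :=
  Nat.sInf_mem (s := {j | 1 ≤ j ∧ J j = nb + nw}) ⟨nb + nw + 1, by omega,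
    Jseq_succ_eq_of_eq (Jseq_self W σ p)⟩

lemma Jseq_lt_of_lt_mComp (hn : 0 < nb + nw) {j : ℕ} (hj : j < mComp W σ p) :
    J j < nb + nw := by
  rcases j.eq_zero_or_pos with rfl | hj0
  · exact hn
  · refine (Jseq_le W σ p j).lt_of_ne fun h => ?_
    exact absurd (Nat.sInf_le (s := {j | 1 ≤ j ∧ J j = nb + nw}) ⟨hj0, h⟩) (not_le.mpr hj)

lemma exists_mem_Jseq_block {b : ℕ} (hb : b < nb + nw) :
    ∃ j, 1 ≤ j ∧ j ≤ mComp W σ p ∧ J (j - 1) ≤ b ∧ b < J j := by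
  have hm : mComp W σ p ∈ {j | b < J j} := by
    show b < J _
    rw [(mComp_spec W σ p).2]; exact hb
  obtain ⟨hbj, hmin⟩ : b < J (sInf {j | b < J j}) ∧ ∀ j, b < J j → sInf {j | b < J j} ≤ j :=
    ⟨Nat.sInf_mem ⟨_, hm⟩, fun j hj => Nat.sInf_le hj⟩
  have hj1 : 1 ≤ sInf {j | b < J j} := Nat.one_le_iff_ne_zero.mpr fun h0 => by
    rw [h0] at hbj; exact Nat.not_lt_zero _ hbj
  refine ⟨_, hj1, hmin _ hm, not_lt.mp fun h => ?_, hbj⟩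
  have := hmin _ h
  omega

lemma Jseq_pred_lt (hn : 0 < nb + nw) {j : ℕ} (h1 : 1 ≤ j) (hj : j ≤ mComp W σ p) :
    J (j - 1) < J j := by
  have := Jseq_lt_Jseq_succ (Jseq_lt_of_lt_mComp hn (show j - 1 < mComp W σ p by omega))
  rwa [Nat.sub_add_cancel h1] at this

lemma IsPrimSeq.induce_Jseq_block_connected (hW : GoodWeights W) (hσ : IsPrimSeq W σ)
    (hn : 0 < nb + nw) {j b : ℕ} (h1 : 1 ≤ j) (hj : j ≤ mComp W σ p) (hb1 : J (j - 1) ≤ b)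
    (hb2 : b < J j) : ((percGraph W p).induce (σ '' Set.Icc (J (j - 1)) b)).Connected := by
  refine hσ.induce_image_Icc_connected hW hb1 (hb2.trans_le (Jseq_le W σ p j)) ?_
    fun k hk hkb => pew_le_of_Jseq_lt_of_lt_Jseq_succ hk (by rw [Nat.sub_add_cancel h1]; omega)
  rcases h1.lt_or_eq with h | rfl
  · exact Or.inr (lt_pew_Jseq (by omega) (Jseq_lt_of_lt_mComp hn (by omega)))
  · exact Or.inl rfl

lemma IsPrimSeq.reachable_iff_mem_Jseq_block (hW : GoodWeights W) (hσ : IsPrimSeq W σ)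
    (hn : 0 < nb + nw) {j a b : ℕ} (h1 : 1 ≤ j) (hj : j ≤ mComp W σ p) (ha1 : J (j - 1) ≤ a)
    (ha2 : a < J j) (hb : b < nb + nw) :
    (percGraph W p).Reachable (σ a) (σ b) ↔ J (j - 1) ≤ b ∧ b < J j := by
  have hJn := Jseq_le W σ p j
  refine ⟨fun h => ⟨not_lt.mp fun hbj => ?_, not_le.mp fun hbj => ?_⟩, fun ⟨hb1, hb2⟩ => ?_⟩
  · have hj1 : 1 ≤ j - 1 := Nat.one_le_iff_ne_zero.mpr fun h0 => by
      rw [h0] at hbj; exact Nat.not_lt_zero _ hbj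
    have hbrk := lt_pew_Jseq hj1 (Jseq_lt_of_lt_mComp hn (show j - 1 < mComp W σ p by omega))
    exact absurd (hσ.lt_of_reachable hW hbrk hbj (by omega) h.symm) (not_lt.mpr ha1)
  · have hbrk := lt_pew_Jseq h1 (show J j < nb + nw by omega)
    exact absurd (hσ.lt_of_reachable hW hbrk ha2 hb h) (not_lt.mpr hbj)
  · have hc := hσ.induce_Jseq_block_connected hW hn h1 hj (ha1.trans (le_max_left a b))
      (max_lt ha2 hb2)
    exact (hc.preconnected ⟨σ a, a, ⟨ha1, le_max_left a b⟩, rfl⟩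
      ⟨σ b, b, ⟨hb1, le_max_right a b⟩, rfl⟩).map (Embedding.induce _).toHom

lemma IsPrimSeq.supp_connectedComponentMk_eq (hW : GoodWeights W) (hσ : IsPrimSeq W σ)
    (hn : 0 < nb + nw) {j a : ℕ} (h1 : 1 ≤ j) (hj : j ≤ mComp W σ p) (ha1 : J (j - 1) ≤ a)
    (ha2 : a < J j) :
    ((percGraph W p).connectedComponentMk (σ a)).supp = σ '' Set.Ico (J (j - 1)) (J j) := by
  ext v
  obtain ⟨b, hb, rfl⟩ := hσ.exists_lt_eq v
  rw [ConnectedComponent.mem_supp_iff, ConnectedComponent.eq, reachable_comm,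
    hσ.reachable_iff_mem_Jseq_block hW hn h1 hj ha1 ha2 hb,
    hσ.2.1.mem_image_iff (fun c hc => hc.2.trans_le (Jseq_le W σ p j)) hb]
  rfl

end PrimBip

theorem statement_3_general {nb nw : ℕ} (hnb : 0 < nb)
    (W : Fin nb → Fin nw → ℝ) (σ : ℕ → V nb nw)
    (hW : GoodWeights W) (hσ : IsPrimSeq W σ)
    (p : ℝ) :
    (∀ S : Set (V nb nw),
      (∃ c : (percGraph W p).ConnectedComponent, S = c.supp) ↔
        (∃ j, 1 ≤ j ∧ j ≤ mComp W σ p ∧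
          S = σ '' Set.Ico (Jseq W σ p (j-1)) (Jseq W σ p j))) ∧
    IsGEOSeq (percGraph W p) (nb + nw) σ := by
  have hn : 0 < nb + nw := by omega
  refine ⟨fun S => ⟨?_, ?_⟩, fun i j hij hjn hreach => ?_⟩
  · rintro ⟨c, rfl⟩
    obtain ⟨v, rfl⟩ := c.exists_rep
    obtain ⟨b, hb, rfl⟩ := hσ.exists_lt_eq v
    obtain ⟨k, h1, hk, hb1, hb2⟩ := exists_mem_Jseq_block hb
    exact ⟨k, h1, hk, hσ.supp_connectedComponentMk_eq hW hn h1 hk hb1 hb2⟩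
  · rintro ⟨k, h1, hk, rfl⟩
    exact ⟨_, (hσ.supp_connectedComponentMk_eq hW hn h1 hk le_rfl (Jseq_pred_lt hn h1 hk)).symm⟩
  · obtain ⟨k, h1, hk, hi1, hi2⟩ := exists_mem_Jseq_block (hij.trans_lt hjn)
    have hj := (hσ.reachable_iff_mem_Jseq_block hW hn h1 hk hi1 hi2 hjn).mp hreach
    exact ⟨_, hi1, hσ.induce_Jseq_block_connected hW hn h1 hk (hi1.trans hij) hj.2⟩

/-- Proposition `prop: prim`: almost surely (here: whenever the edge
weights are distinct, lie in `(0,1)`, and `σ` is the Prim sequence), the vertex sets of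
the connected components of `G(n_b,n_w,p)` are exactly the Prim-rank intervals
`𝒞_j(p) = {σ(i) : J_{j−1}+1 ≤ i ≤ J_j}`, `1 ≤ j ≤ m`, and the Prim sequence is a GEO
for `G(n_b,n_w,p)`. -/
theorem statement_3 {nb nw : ℕ} (hnb : 0 < nb) (hnw : 0 < nw)
    (W : Fin nb → Fin nw → ℝ) (σ : ℕ → V nb nw)
    (hW : GoodWeights W) (hσ : IsPrimSeq W σ)
    (p : ℝ) (hp : p ∈ Set.Ioo (0:ℝ) 1) :
    (∀ S : Set (V nb nw),
      (∃ c : (percGraph W p).ConnectedComponent, S = c.supp) ↔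
        (∃ j, 1 ≤ j ∧ j ≤ mComp W σ p ∧
          S = σ '' Set.Ico (Jseq W σ p (j-1)) (Jseq W σ p j))) ∧
    IsGEOSeq (percGraph W p) (nb + nw) σ :=
  statement_3_general hnb W σ hW hσ p
end

section
/- Let G = (V,E) be a finite graph, π an ordering of V, and let π̂ be the ordering produced by the graph exploration in π-ordering: π̂(1) = π(1) and 𝒜̂_1 = N(π̂(1)); at each step 2 ≤ k ≤ |V|, if 𝒜̂_{k−1} ≠ ∅ then π̂(k) is the element of 𝒜̂_{k−1} of lowest π-rank, otherwise π̂(k) is the element of V∖{π̂(1),…,π̂(k−1)} of lowest π-rank; and 𝒜̂_k = N({π̂(1),…,π̂(k)}). If π is a GEO for G, then π̂ = π. -/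
open MeasureTheory ProbabilityTheory Filter

open PrimBip

/-!
By induction on `k`, the exploration has visited exactly `π(0), …, π(k-1)` before step `k`.
Every unvisited vertex has `π`-rank `≥ k`, so it suffices that `π(k)` is among the candidates.
This is clear when no visited vertex has an unvisited neighbour. Otherwise some `π(j)`, `j < k`,
is adjacent to some `π(b)`, `b ≥ k`; a GEO interval ending at `π(b)` is connected and contains
`π(j)` and `π(k)`, so these are connected, and then a connected GEO interval ending at `π(k)`
shows that `π(k)` has a neighbour of smaller rank, i.e. lies in the frontier.
-/

namespace PrimBip

variable {α : Type*} {m : ℕ} {G : SimpleGraph α} {π : Fin m ≃ α}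

lemma apply_mem_geoInterval_iff {i j k : Fin m} : π k ∈ geoInterval π i j ↔ i ≤ k ∧ k ≤ j := by
  simp [geoInterval]

lemma mem_image_Iio_iff {k : Fin m} {v : α} : v ∈ π '' {j | j < k} ↔ π.symm v < k := by
  rw [Equiv.image_eq_preimage_symm]; rfl

def IsExplorationChoice (G : SimpleGraph α) (π : Fin m ≃ α) (A : Set α) (v : α) : Prop :=
  ((nbhd G A).Nonempty → v ∈ nbhd G A ∧ ∀ w ∈ nbhd G A, π.symm v ≤ π.symm w) ∧
    (¬ (nbhd G A).Nonempty → v ∉ A ∧ ∀ w, w ∉ A → π.symm v ≤ π.symm w)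

lemma reachable_of_induce_preconnected {s : Set α} (h : (G.induce s).Preconnected) {u v : α}
    (hu : u ∈ s) (hv : v ∈ s) : G.Reachable u v :=
  (h ⟨u, hu⟩ ⟨v, hv⟩).map (SimpleGraph.Embedding.induce s).toHom

namespace IsGEO

lemma reachable_of_le_of_le (hπ : IsGEO G π) {i k b : Fin m} (hik : i ≤ k) (hkb : k ≤ b)
    (h : G.Reachable (π i) (π b)) : G.Reachable (π i) (π k) := by
  obtain ⟨i', hi', hconn⟩ := hπ i b (hik.trans hkb) h
  exact reachable_of_induce_preconnected hconn.preconnected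
    (apply_mem_geoInterval_iff.2 ⟨hi', hik.trans hkb⟩)
    (apply_mem_geoInterval_iff.2 ⟨hi'.trans hik, hkb⟩)

lemma exists_adj_symm_lt (hπ : IsGEO G π) {j k : Fin m} (hjk : j < k)
    (h : G.Reachable (π j) (π k)) : ∃ u, π.symm u < k ∧ G.Adj (π k) u := by
  obtain ⟨i', hi', hconn⟩ := hπ j k hjk.le h
  have hk : π k ∈ geoInterval π i' k := apply_mem_geoInterval_iff.2 ⟨hi'.trans hjk.le, le_rfl⟩
  have hj : π j ∈ geoInterval π i' k := apply_mem_geoInterval_iff.2 ⟨hi', hjk.le⟩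
  have : Nontrivial (geoInterval π i' k) :=
    ⟨⟨⟨π k, hk⟩, ⟨π j, hj⟩, fun h => hjk.ne' (π.injective (congrArg Subtype.val h))⟩⟩
  obtain ⟨⟨u, hu⟩, hadj⟩ := hconn.preconnected.exists_adj_of_nontrivial ⟨π k, hk⟩
  have hadj : G.Adj (π k) u := hadj
  refine ⟨u, lt_of_le_of_ne hu.2 fun hu' => hadj.ne ?_, hadj⟩
  simp [← hu']

lemma mem_nbhd_of_adj (hπ : IsGEO G π) {j k b : Fin m} (hjk : j < k) (hkb : k ≤ b)
    (hadj : G.Adj (π j) (π b)) : π k ∈ nbhd G (π '' {i | i < k}) := by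
  obtain ⟨u, hu, hku⟩ :=
    hπ.exists_adj_symm_lt hjk (hπ.reachable_of_le_of_le hjk.le hkb hadj.reachable)
  exact ⟨by simp, u, mem_image_Iio_iff.2 hu, hku.symm⟩

lemma eq_of_isExplorationChoice (hπ : IsGEO G π) {k : Fin m} {v : α}
    (hv : IsExplorationChoice G π (π '' {i | i < k}) v) : v = π k := by
  rw [← π.apply_symm_apply v]
  congr 1
  by_cases hN : (nbhd G (π '' {i | i < k})).Nonempty
  · obtain ⟨⟨hvA, u, hu, hadj⟩, hmin⟩ := hv.1 hN
    obtain ⟨j, hj, rfl⟩ := hu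
    have hkv : k ≤ π.symm v := not_lt.1 fun h => hvA (mem_image_Iio_iff.2 h)
    rw [← π.apply_symm_apply v] at hadj
    exact le_antisymm (by simpa using hmin _ (hπ.mem_nbhd_of_adj hj hkv hadj)) hkv
  · obtain ⟨hvA, hmin⟩ := hv.2 hN
    exact le_antisymm (by simpa using hmin (π k))
      (not_lt.1 fun h => hvA (mem_image_Iio_iff.2 h))

end IsGEO

end PrimBip

theorem statement_4_general {α : Type*} (G : SimpleGraph α) {m : ℕ} (π : Fin m ≃ α)
    (hGEO : IsGEO G π) (hatπ : Fin m → α)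
    -- Step 1: `π̂(1) = π(1)`.
    (h1 : ∀ k : Fin m, (k : ℕ) = 0 → hatπ k = π k)
    -- Step k ≥ 2: with `visited = {π̂(1),…,π̂(k−1)}` and `𝒜̂_{k−1} = N(visited)`,
    -- `π̂(k)` is the lowest `π`-ranking element of `𝒜̂_{k−1}` if the latter is nonempty,
    -- and of the unvisited vertices otherwise.
    (hstep : ∀ k : Fin m, 0 < (k : ℕ) →
      ((nbhd G (hatπ '' {j : Fin m | j < k})).Nonempty →
        hatπ k ∈ nbhd G (hatπ '' {j : Fin m | j < k}) ∧
          ∀ v ∈ nbhd G (hatπ '' {j : Fin m | j < k}), π.symm (hatπ k) ≤ π.symm v) ∧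
      (¬ (nbhd G (hatπ '' {j : Fin m | j < k})).Nonempty →
        hatπ k ∉ hatπ '' {j : Fin m | j < k} ∧
          ∀ v, v ∉ hatπ '' {j : Fin m | j < k} → π.symm (hatπ k) ≤ π.symm v)) :
    hatπ = π := by
  funext k
  induction k using WellFoundedLT.induction with
  | _ k ih =>
    rcases Nat.eq_zero_or_pos k with hk | hk
    · exact h1 k hk
    · have hvisited : hatπ '' {j | j < k} = π '' {j | j < k} := Set.image_congr ih
      have hchoice : IsExplorationChoice G π (hatπ '' {j | j < k}) (hatπ k) := hstep k hk
      exact hGEO.eq_of_isExplorationChoice (hvisited ▸ hchoice)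

/-- Proposition `luka-preserver-graph-explo`: if `π` is a GEO for `G`,
then the ordering `π̂` produced by the graph exploration of `G` in `π`-ordering
(characterised below by its defining recursion) coincides with `π`. -/
theorem statement_4 {α : Type*} [Fintype α] (G : SimpleGraph α) {m : ℕ} (π : Fin m ≃ α)
    (hGEO : IsGEO G π) (hatπ : Fin m → α)
    -- Step 1: `π̂(1) = π(1)`.
    (h1 : ∀ k : Fin m, (k : ℕ) = 0 → hatπ k = π k)
    -- Step k ≥ 2: with `visited = {π̂(1),…,π̂(k−1)}` and `𝒜̂_{k−1} = N(visited)`,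
    -- `π̂(k)` is the lowest `π`-ranking element of `𝒜̂_{k−1}` if the latter is nonempty,
    -- and of the unvisited vertices otherwise.
    (hstep : ∀ k : Fin m, 0 < (k : ℕ) →
      ((nbhd G (hatπ '' {j : Fin m | j < k})).Nonempty →
        hatπ k ∈ nbhd G (hatπ '' {j : Fin m | j < k}) ∧
          ∀ v ∈ nbhd G (hatπ '' {j : Fin m | j < k}), π.symm (hatπ k) ≤ π.symm v) ∧
      (¬ (nbhd G (hatπ '' {j : Fin m | j < k})).Nonempty →
        hatπ k ∉ hatπ '' {j : Fin m | j < k} ∧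
          ∀ v, v ∉ hatπ '' {j : Fin m | j < k} → π.symm (hatπ k) ≤ π.symm v)) :
    hatπ = π :=
  statement_4_general G π hGEO hatπ h1 hstep
end

section
/- Let p ∈ [0,1] and consider the 2-neighbourhood exploration of G(n_b,n_w,p) in Prim's order: σ^b(1) is the black vertex of lowest Prim rank and 𝒜^b_1 = N²(σ^b(1)); at step 2 ≤ k ≤ n_b, if 𝒜^b_{k−1} ≠ ∅ then σ^b(k) is the element of 𝒜^b_{k−1} of lowest Prim rank, otherwise σ^b(k) is the element of V^b_n∖{σ^b(1),…,σ^b(k−1)} of lowest Prim rank; and 𝒜^b_k = N²({σ^b(1),…,σ^b(k)}). For k ∈ [n_b] let τ^b_k = min{i : |Σ(i) ∩ V^b_n| = k} be the Prim rank of the k-th black vertex. Then σ^b(k) = σ(τ^b_k) for every k ∈ [n_b]. -/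
open MeasureTheory ProbabilityTheory Filter

open PrimBip

/-!
Induction on `k`. If `σ^b(j) = σ(τ^b_j)` for `j < k`, the explored set is exactly the set `S` of
black vertices of (0-based) Prim rank below `t = τ^b_k - 1`, and every black vertex outside `S`
has rank `≥ t`; so it suffices to show that `σ t ∈ N²(S)` as soon as `N²(S) ≠ ∅`.
A path `u - w - v` with `u ∈ S` and `v ∈ N²(S)` crosses every Prim cut between the ranks of `u`
and `v` by an open edge, so each Prim step in between adds an open edge. Going back from `σ t` along
these Prim edges inside the current component, the white parent of `σ t` has an open edge to an
earlier black vertex.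
-/

namespace PrimBip

variable {nb nw : ℕ} {W : Fin nb → Fin nw → ℝ} {σ : ℕ → V nb nw} {p : ℝ}

section Bipartite

lemma notMem_blacks_of_mem_whites {v : V nb nw} (h : v ∈ whites nb nw) : v ∉ blacks nb nw := by
  rintro ⟨b, rfl⟩
  obtain ⟨w, hw⟩ := h
  exact Sum.inr_ne_inl hw

lemma percGraph_adj_mem_whites (hp : p ≤ 1) {u v : V nb nw} (h : (percGraph W p).Adj u v)
    (hu : u ∈ blacks nb nw) : v ∈ whites nb nw := by
  obtain ⟨b, rfl⟩ := hu
  rcases v with b' | w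
  · have h2 : (2 : ℝ) ≤ p := h.2
    linarith
  · exact ⟨w, rfl⟩

lemma percGraph_adj_mem_blacks (hp : p ≤ 1) {u v : V nb nw} (h : (percGraph W p).Adj u v)
    (hu : u ∈ whites nb nw) : v ∈ blacks nb nw := by
  obtain ⟨w, rfl⟩ := hu
  rcases v with b | w'
  · exact ⟨b, rfl⟩
  · have h2 : (2 : ℝ) ≤ p := h.2
    linarith

lemma nbhd_subset_whites (hp : p ≤ 1) {A : Set (V nb nw)} (hA : A ⊆ blacks nb nw) :
    nbhd (percGraph W p) A ⊆ whites nb nw := by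
  rintro v ⟨-, a, ha, hav⟩
  exact percGraph_adj_mem_whites hp hav (hA ha)

lemma nbhd2_subset_blacks (hp : p ≤ 1) {A : Set (V nb nw)} (hA : A ⊆ blacks nb nw) :
    nbhd2 (percGraph W p) A ⊆ blacks nb nw := by
  rintro v ⟨⟨-, w, hw, hwv⟩, -⟩
  exact percGraph_adj_mem_blacks hp hwv (nbhd_subset_whites hp hA hw)

end Bipartite

section Rank

lemma IsPrimSeq.apply_rk0 (hσ : IsPrimSeq W σ) (v : V nb nw) : σ (rk0 σ v) = v := by
  obtain ⟨i, -, hi⟩ := hσ.1.symm ▸ Set.mem_univ v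
  exact Nat.sInf_mem (⟨i, hi⟩ : {j | σ j = v}.Nonempty)

lemma IsPrimSeq.rk0_lt (hσ : IsPrimSeq W σ) (v : V nb nw) : rk0 σ v < nb + nw := by
  obtain ⟨i, hi, hiv⟩ := hσ.1.symm ▸ Set.mem_univ v
  exact lt_of_le_of_lt (Nat.sInf_le hiv) hi

lemma IsPrimSeq.rk0_apply (hσ : IsPrimSeq W σ) {i : ℕ} (hi : i < nb + nw) : rk0 σ (σ i) = i :=
  hσ.2.1 (hσ.rk0_lt _) hi (hσ.apply_rk0 _)

lemma IsPrimSeq.mem_SigB_iff (hσ : IsPrimSeq W σ) {i : ℕ} {v : V nb nw} :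
    v ∈ SigB σ i ↔ v ∈ blacks nb nw ∧ rk0 σ v < i := by
  refine and_comm.trans (and_congr_right fun _ => ⟨?_, fun h => ⟨_, h, hσ.apply_rk0 v⟩⟩)
  rintro ⟨j, hj, rfl⟩
  exact lt_of_le_of_lt (Nat.sInf_le rfl) hj

def IsPrimMin (σ : ℕ → V nb nw) (S : Set (V nb nw)) (v : V nb nw) : Prop :=
  v ∈ S ∧ ∀ u ∈ S, rk0 σ v ≤ rk0 σ u

lemma IsPrimSeq.isPrimMin_unique (hσ : IsPrimSeq W σ) {S : Set (V nb nw)} {v v' : V nb nw}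
    (hv : IsPrimMin σ S v) (hv' : IsPrimMin σ S v') : v = v' := by
  rw [← hσ.apply_rk0 v, ← hσ.apply_rk0 v', le_antisymm (hv.2 v' hv'.1) (hv'.2 v hv.1)]

lemma IsPrimSeq.isPrimMin_blacks_diff_SigB (hσ : IsPrimSeq W σ) {x : V nb nw}
    (hx : x ∈ blacks nb nw) : IsPrimMin σ (blacks nb nw \ SigB σ (rk0 σ x)) x :=
  ⟨⟨hx, fun h => (hσ.mem_SigB_iff.1 h).2.false⟩,
    fun _ hu => not_lt.1 fun h => hu.2 (hσ.mem_SigB_iff.2 ⟨hu.1, h⟩)⟩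

end Rank

section BlackIndex

lemma SigB_mono : Monotone (SigB σ) :=
  fun _ _ h => Set.inter_subset_inter_left _ (Set.image_mono (Set.Iio_subset_Iio h))

lemma SigB_zero : SigB σ 0 = ∅ := by
  simp [SigB, Sig]

lemma SigB_succ (i : ℕ) : SigB σ (i + 1) = insert (σ i) (Sig σ i) ∩ blacks nb nw := by
  rw [SigB, Sig, Sig, Set.Iio_add_one_eq_Iic, ← Set.Iio_insert, Set.image_insert_eq]

lemma SigB_succ_of_notMem_blacks {i : ℕ} (hb : σ i ∉ blacks nb nw) :
    SigB σ (i + 1) = SigB σ i := by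
  rw [SigB_succ, Set.insert_inter_of_notMem hb, SigB]

lemma IsPrimSeq.ncard_SigB_succ (hσ : IsPrimSeq W σ) {i : ℕ} (hi : i < nb + nw)
    (hb : σ i ∈ blacks nb nw) : (SigB σ (i + 1)).ncard = (SigB σ i).ncard + 1 := by
  have hnot : σ i ∉ SigB σ i := fun h => (hσ.mem_SigB_iff.1 h).2.ne (hσ.rk0_apply hi)
  rw [SigB_succ, Set.insert_inter_of_mem hb, ← SigB, Set.ncard_insert_of_notMem hnot]

lemma IsPrimSeq.ncard_SigB_top (hσ : IsPrimSeq W σ) : (SigB σ (nb + nw)).ncard = nb := by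
  rw [SigB, Sig, hσ.1, Set.univ_inter, blacks, ← Nat.card_coe_set_eq,
    Nat.card_range_of_injective Sum.inl_injective, Nat.card_eq_fintype_card, Fintype.card_fin]

/-- For a black vertex `v`, the `k` such that `v = σ^b(k) = σ(τ^b_k)`. -/
noncomputable def blackIndex (σ : ℕ → V nb nw) (v : V nb nw) : ℕ :=
  (SigB σ (rk0 σ v + 1)).ncard

lemma IsPrimSeq.blackIndex_eq (hσ : IsPrimSeq W σ) {v : V nb nw} (hv : v ∈ blacks nb nw) :
    blackIndex σ v = (SigB σ (rk0 σ v)).ncard + 1 :=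
  hσ.ncard_SigB_succ (hσ.rk0_lt v) ((hσ.apply_rk0 v).symm ▸ hv)

lemma IsPrimSeq.blackIndex_lt_iff (hσ : IsPrimSeq W σ) {u v : V nb nw}
    (hv : v ∈ blacks nb nw) : blackIndex σ u < blackIndex σ v ↔ rk0 σ u < rk0 σ v := by
  refine ⟨fun h => not_le.1 fun hvu => h.not_ge ?_, fun h => ?_⟩
  · exact Set.ncard_le_ncard (SigB_mono (Nat.succ_le_succ hvu))
  · rw [hσ.blackIndex_eq hv, Nat.lt_succ_iff]
    exact Set.ncard_le_ncard (SigB_mono h)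

lemma IsPrimSeq.sigb_blackIndex (hσ : IsPrimSeq W σ) {v : V nb nw} (hv : v ∈ blacks nb nw) :
    sigb σ (blackIndex σ v) = v := by
  have htb : tb σ (blackIndex σ v) = rk0 σ v + 1 := by
    refine le_antisymm (Nat.sInf_le rfl) (not_lt.1 fun hlt => ?_)
    have hmem : (SigB σ (tb σ (blackIndex σ v))).ncard = blackIndex σ v :=
      Nat.sInf_mem (⟨_, rfl⟩ : {i | (SigB σ i).ncard = blackIndex σ v}.Nonempty)
    have hle := Set.ncard_le_ncard (SigB_mono (σ := σ) (Nat.lt_succ_iff.1 hlt))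
    rw [hmem, hσ.blackIndex_eq hv] at hle
    omega
  rw [sigb, vat, htb, Nat.add_sub_cancel, hσ.apply_rk0]

lemma IsPrimSeq.exists_blackIndex_eq (hσ : IsPrimSeq W σ) {k : ℕ} (hk1 : 1 ≤ k) (hk : k ≤ nb) :
    ∃ v ∈ blacks nb nw, blackIndex σ v = k := by
  classical
  have htop : k ≤ (SigB σ (nb + nw)).ncard := by rwa [hσ.ncard_SigB_top]
  have hex : ∃ i, k ≤ (SigB σ i).ncard := ⟨_, htop⟩
  obtain ⟨i, hi⟩ : ∃ i, Nat.find hex = i + 1 := by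
    refine Nat.exists_eq_succ_of_ne_zero fun h => ?_
    have := Nat.find_spec hex
    rw [h, SigB_zero, Set.ncard_empty] at this
    omega
  have hki : k ≤ (SigB σ (i + 1)).ncard := hi ▸ Nat.find_spec hex
  have hlt : (SigB σ i).ncard < k := not_le.1 (Nat.find_min hex (by omega))
  have hin : i < nb + nw := by have := Nat.find_min' hex htop; omega
  have hb : σ i ∈ blacks nb nw := by
    by_contra hb
    rw [SigB_succ_of_notMem_blacks hb] at hki
    omega
  refine ⟨σ i, hb, ?_⟩
  rw [hσ.blackIndex_eq hb, hσ.rk0_apply hin]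
  have := hσ.ncard_SigB_succ hin hb
  omega

lemma IsPrimSeq.sigb_mem_blacks (hσ : IsPrimSeq W σ) {k : ℕ} (hk1 : 1 ≤ k) (hk : k ≤ nb) :
    sigb σ k ∈ blacks nb nw := by
  obtain ⟨v, hv, rfl⟩ := hσ.exists_blackIndex_eq hk1 hk
  rwa [hσ.sigb_blackIndex hv]

lemma IsPrimSeq.blackIndex_sigb (hσ : IsPrimSeq W σ) {k : ℕ} (hk1 : 1 ≤ k) (hk : k ≤ nb) :
    blackIndex σ (sigb σ k) = k := by
  obtain ⟨v, hv, rfl⟩ := hσ.exists_blackIndex_eq hk1 hk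
  rw [hσ.sigb_blackIndex hv]

lemma IsPrimSeq.image_sigb_Icc (hσ : IsPrimSeq W σ) {k : ℕ} (hk1 : 1 ≤ k) (hk : k ≤ nb) :
    sigb σ '' Set.Icc 1 (k - 1) = SigB σ (rk0 σ (sigb σ k)) := by
  ext u
  rw [hσ.mem_SigB_iff, ← hσ.blackIndex_lt_iff (hσ.sigb_mem_blacks hk1 hk),
    hσ.blackIndex_sigb hk1 hk]
  constructor
  · rintro ⟨j, ⟨hj1, hjk⟩, rfl⟩
    exact ⟨hσ.sigb_mem_blacks hj1 (by omega), by rw [hσ.blackIndex_sigb hj1 (by omega)]; omega⟩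
  · rintro ⟨hu, hlt⟩
    have := hσ.blackIndex_eq hu
    exact ⟨blackIndex σ u, ⟨by omega, by omega⟩, hσ.sigb_blackIndex hu⟩

end BlackIndex

section Cut

def CutOpen (W : Fin nb → Fin nw → ℝ) (σ : ℕ → V nb nw) (p : ℝ) (i : ℕ) : Prop :=
  ∃ a b, a < i ∧ i ≤ b ∧ b < nb + nw ∧ wt W (σ a) (σ b) ≤ p

lemma not_cutOpen_zero : ¬ CutOpen W σ p 0 := by
  rintro ⟨a, -, ha, -⟩
  exact Nat.not_lt_zero a ha

lemma cutOpen_of_adj_adj {a b c i : ℕ} (hb : b < nb + nw) (hc : c < nb + nw)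
    (hab : (percGraph W p).Adj (σ a) (σ b)) (hbc : (percGraph W p).Adj (σ b) (σ c))
    (hai : a < i) (hic : i ≤ c) : CutOpen W σ p i := by
  rcases lt_or_ge b i with hbi | hib
  · exact ⟨b, c, hbi, hic, hc, hbc.2⟩
  · exact ⟨a, b, hai, hib, hb, hab.2⟩

/-- Prim's edge at step `i` is no heavier than an open edge across the cut at `i`, and it cannot
start before `a`, since it would then cross the closed cut at `a`. -/
lemma IsPrimSeq.exists_adj_of_cutOpen (hσ : IsPrimSeq W σ) {a i : ℕ} (ha : ¬ CutOpen W σ p a)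
    (hai : a < i) (hi : i < nb + nw) (hc : CutOpen W σ p i) :
    ∃ j, a ≤ j ∧ j < i ∧ (percGraph W p).Adj (σ j) (σ i) := by
  obtain ⟨j, hji, hmin⟩ := hσ.2.2 i (by omega) hi
  obtain ⟨a', b', ha', hb', hbn', hwt⟩ := hc
  have hjp : wt W (σ j) (σ i) ≤ p := (hmin a' b' ha' hb' hbn').trans hwt
  refine ⟨j, not_lt.1 fun hja => ha ⟨j, i, hja, hai.le, hi, hjp⟩, hji, fun he => ?_, hjp⟩
  exact hji.ne (hσ.2.1 (hji.trans hi) hi he)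

lemma IsPrimSeq.exists_adj_adj_of_cutOpen (hσ : IsPrimSeq W σ) (hp : p ≤ 1) {s t : ℕ}
    (hs : σ s ∈ blacks nb nw) (ht : σ t ∈ blacks nb nw) (hst : s < t) (htn : t < nb + nw)
    (hopen : ∀ i, s < i → i ≤ t → CutOpen W σ p i) :
    ∃ j j', j' < t ∧ (percGraph W p).Adj (σ j') (σ j) ∧ (percGraph W p).Adj (σ j) (σ t) := by
  classical
  -- `a` is the Prim rank at which the component of `σ s` and `σ t` starts.
  set a := Nat.findGreatest (fun i => ¬ CutOpen W σ p i) s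
  have ha : ¬ CutOpen W σ p a :=
    Nat.findGreatest_spec (P := fun i => ¬ CutOpen W σ p i) (Nat.zero_le s) not_cutOpen_zero
  have has : a ≤ s := Nat.findGreatest_le s
  have hopen' : ∀ i, a < i → i ≤ t → CutOpen W σ p i := fun i hai hit =>
    (le_or_gt i s).elim (fun his => not_not.1 (Nat.findGreatest_is_greatest hai his))
      (fun hsi => hopen i hsi hit)
  obtain ⟨j, haj, hjt, hjt_adj⟩ :=
    hσ.exists_adj_of_cutOpen ha (by omega) htn (hopen' t (by omega) le_rfl)
  have hjw : σ j ∈ whites nb nw := percGraph_adj_mem_whites hp hjt_adj.symm ht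
  rcases haj.lt_or_eq with haj | rfl
  · obtain ⟨j', -, hj'j, hadj⟩ := hσ.exists_adj_of_cutOpen ha haj (by omega) (hopen' j haj hjt.le)
    exact ⟨j, j', hj'j.trans hjt, hadj, hjt_adj⟩
  · have has' : a < s := has.lt_of_ne fun h => notMem_blacks_of_mem_whites hjw (h ▸ hs)
    obtain ⟨j', haj', hj', hadj⟩ := hσ.exists_adj_of_cutOpen ha (Nat.lt_succ_self a) (by omega)
      (hopen' (a + 1) (by omega) (by omega))
    obtain rfl : j' = a := by omega
    exact ⟨a, a + 1, by omega, hadj.symm, hjt_adj⟩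

end Cut

lemma IsPrimSeq.isPrimMin_nbhd2_SigB (hσ : IsPrimSeq W σ) (hp : p ≤ 1) {x : V nb nw}
    (hx : x ∈ blacks nb nw) (hne : (nbhd2 (percGraph W p) (SigB σ (rk0 σ x))).Nonempty) :
    IsPrimMin σ (nbhd2 (percGraph W p) (SigB σ (rk0 σ x))) x := by
  set S := SigB σ (rk0 σ x)
  have hSb : S ⊆ blacks nb nw := Set.inter_subset_right
  obtain ⟨v, ⟨⟨-, w, ⟨-, u, hu, huw⟩, hwv⟩, hvS⟩⟩ := hne
  have hub := hσ.mem_SigB_iff.1 hu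
  have hw : w ∈ whites nb nw := percGraph_adj_mem_whites hp huw hub.1
  have hv : v ∈ blacks nb nw := percGraph_adj_mem_blacks hp hwv hw
  have hxv : rk0 σ x ≤ rk0 σ v := not_lt.1 fun h => hvS (hσ.mem_SigB_iff.2 ⟨hv, h⟩)
  rw [← hσ.apply_rk0 u, ← hσ.apply_rk0 w] at huw
  rw [← hσ.apply_rk0 w, ← hσ.apply_rk0 v] at hwv
  obtain ⟨j, j', hj'x, hj'j, hjx⟩ := hσ.exists_adj_adj_of_cutOpen hp
    ((hσ.apply_rk0 u).symm ▸ hub.1) ((hσ.apply_rk0 x).symm ▸ hx) hub.2 (hσ.rk0_lt x)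
    fun i hui hix => cutOpen_of_adj_adj (hσ.rk0_lt w) (hσ.rk0_lt v) huw hwv hui (hix.trans hxv)
  rw [hσ.apply_rk0] at hjx
  have hjw : σ j ∈ whites nb nw := percGraph_adj_mem_whites hp hjx.symm hx
  have hj'S : σ j' ∈ S := hσ.mem_SigB_iff.2
    ⟨percGraph_adj_mem_blacks hp hj'j.symm hjw, by rwa [hσ.rk0_apply (hj'x.trans (hσ.rk0_lt x))]⟩
  have hxS : x ∉ S := fun h => (hσ.mem_SigB_iff.1 h).2.false
  refine ⟨⟨⟨fun h => notMem_blacks_of_mem_whites (nbhd_subset_whites hp hSb h) hx,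
    σ j, ⟨fun h => notMem_blacks_of_mem_whites hjw (hSb h), σ j', hj'S, hj'j⟩, hjx⟩, hxS⟩, ?_⟩
  intro y hy
  exact (hσ.isPrimMin_blacks_diff_SigB hx).2 y ⟨nbhd2_subset_blacks hp hSb hy, hy.2⟩

end PrimBip

open PrimBip

theorem statement_5_general {nb nw : ℕ}
    (W : Fin nb → Fin nw → ℝ) (σ : ℕ → V nb nw)
    (hσ : IsPrimSeq W σ)
    (p : ℝ) (hp : p ∈ Set.Icc (0:ℝ) 1)
    (sb : ℕ → V nb nw)
    -- Step 1: `σ^b(1)` is the black vertex of lowest Prim rank.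
    (h1 : sb 1 ∈ blacks nb nw ∧ ∀ v ∈ blacks nb nw, rk0 σ (sb 1) ≤ rk0 σ v)
    -- Step k ≥ 2: with `𝒜^b_{k−1} = N²({σ^b(1),…,σ^b(k−1)})`, the vertex `σ^b(k)` is the
    -- element of `𝒜^b_{k−1}` of lowest Prim rank if nonempty, and otherwise the element of
    -- `V^b ∖ {σ^b(1),…,σ^b(k−1)}` of lowest Prim rank.
    (hstep : ∀ k, 2 ≤ k → k ≤ nb →
      ((nbhd2 (percGraph W p) (sb '' Set.Icc 1 (k-1))).Nonempty →
        sb k ∈ nbhd2 (percGraph W p) (sb '' Set.Icc 1 (k-1)) ∧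
          ∀ v ∈ nbhd2 (percGraph W p) (sb '' Set.Icc 1 (k-1)), rk0 σ (sb k) ≤ rk0 σ v) ∧
      (¬ (nbhd2 (percGraph W p) (sb '' Set.Icc 1 (k-1))).Nonempty →
        sb k ∈ blacks nb nw \ (sb '' Set.Icc 1 (k-1)) ∧
          ∀ v ∈ blacks nb nw \ (sb '' Set.Icc 1 (k-1)), rk0 σ (sb k) ≤ rk0 σ v)) :
    ∀ k, 1 ≤ k → k ≤ nb → sb k = vat σ (tb σ k) := by
  intro k
  induction k using Nat.strong_induction_on with
  | _ k IH =>
    intro hk1 hknb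
    change sb k = sigb σ k
    have hbk := hσ.sigb_mem_blacks hk1 hknb
    have hS : sb '' Set.Icc 1 (k - 1) = SigB σ (rk0 σ (sigb σ k)) := by
      rw [← hσ.image_sigb_Icc hk1 hknb]
      exact Set.image_congr fun j ⟨hj1, hjk⟩ => IH j (by omega) hj1 (by omega)
    rcases hk1.eq_or_lt with rfl | hk2
    · have hS1 : SigB σ (rk0 σ (sigb σ 1)) = ∅ := by simpa using hS.symm
      have := hσ.isPrimMin_blacks_diff_SigB hbk
      rw [hS1, Set.sdiff_empty] at this
      exact hσ.isPrimMin_unique h1 this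
    · obtain ⟨hne, hemp⟩ := hstep k hk2 hknb
      rw [hS] at hne hemp
      by_cases hA : (nbhd2 (percGraph W p) (SigB σ (rk0 σ (sigb σ k)))).Nonempty
      · exact hσ.isPrimMin_unique (hne hA) (hσ.isPrimMin_nbhd2_SigB hp.2 hbk hA)
      · exact hσ.isPrimMin_unique (hemp hA) (hσ.isPrimMin_blacks_diff_SigB hbk)

/-- Proposition `prop: prim-explore`: the ordering `σ^b` of the black
vertices produced by the 2-neighbourhood exploration of `G(n_b,n_w,p)` in Prim's order
(characterised below by its defining recursion) satisfies `σ^b(k) = σ(τ^b_k)` for every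
`k ∈ [n_b]`. -/
theorem statement_5 {nb nw : ℕ} (hnb : 0 < nb) (hnw : 0 < nw)
    (W : Fin nb → Fin nw → ℝ) (σ : ℕ → V nb nw)
    (hW : GoodWeights W) (hσ : IsPrimSeq W σ)
    (p : ℝ) (hp : p ∈ Set.Icc (0:ℝ) 1)
    (sb : ℕ → V nb nw)
    -- Step 1: `σ^b(1)` is the black vertex of lowest Prim rank.
    (h1 : sb 1 ∈ blacks nb nw ∧ ∀ v ∈ blacks nb nw, rk0 σ (sb 1) ≤ rk0 σ v)
    -- Step k ≥ 2: with `𝒜^b_{k−1} = N²({σ^b(1),…,σ^b(k−1)})`, the vertex `σ^b(k)` is the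
    -- element of `𝒜^b_{k−1}` of lowest Prim rank if nonempty, and otherwise the element of
    -- `V^b ∖ {σ^b(1),…,σ^b(k−1)}` of lowest Prim rank.
    (hstep : ∀ k, 2 ≤ k → k ≤ nb →
      ((nbhd2 (percGraph W p) (sb '' Set.Icc 1 (k-1))).Nonempty →
        sb k ∈ nbhd2 (percGraph W p) (sb '' Set.Icc 1 (k-1)) ∧
          ∀ v ∈ nbhd2 (percGraph W p) (sb '' Set.Icc 1 (k-1)), rk0 σ (sb k) ≤ rk0 σ v) ∧
      (¬ (nbhd2 (percGraph W p) (sb '' Set.Icc 1 (k-1))).Nonempty →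
        sb k ∈ blacks nb nw \ (sb '' Set.Icc 1 (k-1)) ∧
          ∀ v ∈ blacks nb nw \ (sb '' Set.Icc 1 (k-1)), rk0 σ (sb k) ≤ rk0 σ v)) :
    ∀ k, 1 ≤ k → k ≤ nb → sb k = vat σ (tb σ k) :=
  statement_5_general W σ hσ p hp sb h1 hstep
end

section
/- Let γ_θ = √((1−θ)/θ) with θ ∈ (0,1), and for λ > 1 let (q_1(λ), q_2(λ)) denote the unique solution in (0,1)² of the system x = e^{λγ_θ(y−1)}, y = e^{λγ_θ^{−1}(x−1)}. Then: (i) for i ∈ {1,2}, λ ↦ q_i(λ) is differentiable and strictly decreasing on (1,∞), with q_i(λ) → 1 as λ → 1+ and q_i(λ) → 0 as λ → ∞; (ii) as λ → 1+, q_1(λ) − 1 = γ_θ (q_2(λ) − 1) + o(|q_2(λ) − 1|). -/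
/-!
Eliminating `q₂ = exp (λγ⁻¹(q₁ - 1))`, `q₁(λ)` is a zero in `(0,1)` of
`F_λ(x) = residual γ λ x = log x - λγ (exp (λγ⁻¹(x - 1)) - 1)`. This function is strictly
concave and vanishes at `1`, so it has no other zero in `(0,1)`, is negative to the left of
`q₁(λ)` and positive between `q₁(λ)` and `1`. As `F_λ(x)` increases with `λ` and `F_1 < 0` on
`(0,1)`, `q₁` is strictly decreasing and tends to `1` as `λ → 1+`. Differentiability is the
implicit function theorem: `∂ₓF_λ(q₁) = q₁⁻¹ - λ²q₂ > 0`, since `t e^{-t} < 1 - e^{-t}` applied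
to both equations gives `λ²q₁q₂ < 1`. The system is invariant under
`(q₁, q₂, γ) ↦ (q₂, q₁, γ⁻¹)`, which transfers everything to `q₂`; the limits at infinity and
(ii) follow by plugging into the equations, the latter from `e^t = 1 + t + o(t)`.
-/

open Filter Set Topology Real Asymptotics

theorem HasStrictFDerivAt.differentiableAt_of_unique_zero
    {𝕜 : Type*} [NontriviallyNormedField 𝕜]
    {E₁ : Type*} [NormedAddCommGroup E₁] [NormedSpace 𝕜 E₁] [CompleteSpace E₁]
    {E₂ : Type*} [NormedAddCommGroup E₂] [NormedSpace 𝕜 E₂] [CompleteSpace E₂]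
    {F : Type*} [NormedAddCommGroup F] [NormedSpace 𝕜 F] [CompleteSpace F]
    {f : E₁ × E₂ → F} {f' : E₁ × E₂ →L[𝕜] F} {q : E₁ → E₂} {a : E₁} {U : Set E₂}
    (hf : HasStrictFDerivAt f f' (a, q a)) (hf₂ : (f' ∘L .inr 𝕜 E₁ E₂).IsInvertible)
    (hU : U ∈ 𝓝 (q a))
    (huniq : ∀ᶠ x in 𝓝 a, ∀ y ∈ U, f (x, y) = f (a, q a) → y = q x) :
    DifferentiableAt 𝕜 q a := by
  set ψ := hf.implicitFunctionOfProdDomain hf₂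
  have hψq : ψ =ᶠ[𝓝 a] q := by
    filter_upwards [huniq, hf.eventually_apply_implicitFunctionOfProdDomain hf₂,
      hf.tendsto_implicitFunctionOfProdDomain hf₂ hU] with x hx hfx hψU
    exact hx _ hψU hfx
  exact hψq.differentiableAt_iff.1
    (hf.hasStrictFDerivAt_implicitFunctionOfProdDomain hf₂).differentiableAt

theorem isInvertible_comp_inr_of_hasDerivAt {f : ℝ × ℝ → ℝ}
    {f' : ℝ × ℝ →L[ℝ] ℝ} {a b d : ℝ} (hf : HasFDerivAt f f' (a, b))
    (hd : HasDerivAt (fun y => f (a, y)) d b) (hd0 : d ≠ 0) :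
    (f' ∘L .inr ℝ ℝ ℝ).IsInvertible := by
  have h : f' ∘L .inr ℝ ℝ ℝ = (ContinuousLinearEquiv.unitsEquivAut ℝ (Units.mk0 d hd0) :
      ℝ →L[ℝ] ℝ) := by
    have := (hf.comp b (hasFDerivAt_prodMk_right a b)).unique hd.hasFDerivAt
    ext
    simp [this]
  rw [h]
  exact ContinuousLinearMap.isInvertible_equiv

theorem StrictConcaveOn.neg_of_lt_of_eq_zero {s : Set ℝ} {f : ℝ → ℝ}
    (hf : StrictConcaveOn ℝ s f) {x q r : ℝ} (hx : x ∈ s) (hr : r ∈ s) (hxq : x < q) (hqr : q < r)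
    (hq0 : f q = 0) (hr0 : f r = 0) : f x < 0 := by
  have := hf.slope_anti_adjacent hx hr hxq hqr
  rw [hq0, hr0, sub_self, zero_div, zero_sub, neg_div, neg_pos] at this
  by_contra! h
  exact this.not_ge (div_nonneg h (sub_pos.2 hxq).le)

theorem StrictConcaveOn.pos_of_eq_zero {s : Set ℝ} {f : ℝ → ℝ}
    (hf : StrictConcaveOn ℝ s f) {x q r : ℝ} (hq : q ∈ s) (hr : r ∈ s) (hqx : q < x) (hxr : x < r)
    (hq0 : f q = 0) (hr0 : f r = 0) : 0 < f x := by
  have := hf.slope_anti_adjacent hq hr hqx hxr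
  rw [hq0, hr0, zero_sub, sub_zero, neg_div] at this
  by_contra! h
  have h1 : 0 ≤ -(f x / (r - x)) := neg_nonneg.2 (div_nonpos_of_nonpos_of_nonneg h (by linarith))
  have h2 : f x / (x - q) ≤ 0 := div_nonpos_of_nonpos_of_nonneg h (by linarith)
  linarith

theorem StrictConcaveOn.pos_iff_of_eq_zero {s : Set ℝ} {f : ℝ → ℝ}
    (hf : StrictConcaveOn ℝ s f) {x q r : ℝ} (hx : x ∈ s) (hq : q ∈ s) (hr : r ∈ s)
    (hxr : x < r) (hqr : q < r) (hq0 : f q = 0) (hr0 : f r = 0) : 0 < f x ↔ q < x := by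
  refine ⟨fun h => ?_, fun h => hf.pos_of_eq_zero hq hr h hxr hq0 hr0⟩
  by_contra! hxq
  rcases hxq.lt_or_eq with hxq | rfl
  · exact (hf.neg_of_lt_of_eq_zero hx hr hxq hqr hq0 hr0).not_gt h
  · exact h.ne' hq0

theorem StrictConcaveOn.neg_iff_of_eq_zero {s : Set ℝ} {f : ℝ → ℝ}
    (hf : StrictConcaveOn ℝ s f) {x q r : ℝ} (hx : x ∈ s) (hq : q ∈ s) (hr : r ∈ s)
    (hxr : x < r) (hqr : q < r) (hq0 : f q = 0) (hr0 : f r = 0) : f x < 0 ↔ x < q := by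
  refine ⟨fun h => ?_, fun h => hf.neg_of_lt_of_eq_zero hx hr h hqr hq0 hr0⟩
  by_contra! hqx
  rcases hqx.lt_or_eq with hqx | rfl
  · exact (hf.pos_of_eq_zero hq hr hqx hxr hq0 hr0).not_gt h
  · exact h.ne hq0

theorem mul_exp_neg_lt_one_sub_exp_neg {t : ℝ} (ht : 0 < t) : t * exp (-t) < 1 - exp (-t) := by
  have h := mul_lt_mul_of_pos_right (add_one_lt_exp ht.ne') (exp_pos (-t))
  rw [← exp_add, add_neg_cancel, exp_zero] at h
  linarith

theorem mul_mul_mul_lt_one_of_eq_exp {a b x y : ℝ} (ha : 0 < a) (hb : 0 < b) (hx : x < 1)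
    (hy : y < 1) (hxy : x = Real.exp (a * (y - 1))) (hyx : y = Real.exp (b * (x - 1))) :
    a * b * x * y < 1 := by
  have hx0 : 0 < x := hxy ▸ exp_pos _
  have hy0 : 0 < y := hyx ▸ exp_pos _
  have h₁ : a * (1 - y) * x < 1 - x := by
    rw [hxy, show a * (y - 1) = -(a * (1 - y)) by ring]
    exact mul_exp_neg_lt_one_sub_exp_neg (by nlinarith)
  have h₂ : b * (1 - x) * y < 1 - y := by
    rw [hyx, show b * (x - 1) = -(b * (1 - x)) by ring]
    exact mul_exp_neg_lt_one_sub_exp_neg (by nlinarith)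
  have := mul_lt_mul'' h₁ h₂ (by have := sub_pos.2 hy; positivity)
    (by have := sub_pos.2 hx; positivity)
  have hpos : 0 < (1 - x) * (1 - y) := by nlinarith
  nlinarith

theorem tendsto_exp_mul_mul_sub_one_atTop {c b : ℝ} {g : ℝ → ℝ} (hc : 0 < c) (hb : b < 1)
    (hg : ∀ᶠ l in atTop, g l ≤ b) :
    Tendsto (fun l => Real.exp (l * c * (g l - 1))) atTop (𝓝 0) := by
  have hlim : Tendsto (fun l => Real.exp (l * (c * (b - 1)))) atTop (𝓝 0) :=
    tendsto_exp_atBot.comp (tendsto_id.atTop_mul_const_of_neg (by nlinarith))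
  refine tendsto_of_tendsto_of_tendsto_of_le_of_le' tendsto_const_nhds hlim
    (Eventually.of_forall fun l => (exp_pos _).le) ?_
  filter_upwards [hg, eventually_ge_atTop 0] with l hgl hl
  rw [exp_le_exp, ← mul_assoc]
  exact mul_le_mul_of_nonneg_left (by linarith) (by positivity)

theorem isLittleO_exp_mul_mul_sub_one_sub {α : Type*} {L : Filter α} {s u : α → ℝ} (c : ℝ)
    (hs : Tendsto s L (𝓝 1)) (hu : Tendsto u L (𝓝 0)) :
    (fun a => (Real.exp (s a * c * u a) - 1) - c * u a) =o[L] u := by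
  have ht : Tendsto (fun a => s a * c * u a) L (𝓝 0) := by
    simpa using (hs.mul_const c).mul hu
  have htu : (fun a => s a * c * u a) =O[L] u := by
    simpa using ((hs.mul_const c).isBigO_one ℝ).mul (isBigO_refl u L)
  have hexp : (fun t => Real.exp t - 1 - t) =o[𝓝 0] fun t => t := by
    simpa using (hasDerivAt_exp 0).isLittleO
  have h₁ := (hexp.comp_tendsto ht).trans_isBigO htu
  have h₂ : (fun a => (s a - 1) * (c * u a)) =o[L] u := by
    simpa using ((isLittleO_one_iff ℝ).2 (by simpa using hs.sub_const 1)).mul_isBigO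
      ((isBigO_refl u L).const_mul_left c)
  refine (h₁.add h₂).congr_left fun a => ?_
  simp only [Function.comp_apply]
  ring

namespace FixedPointSystem

noncomputable def residual (γ l x : ℝ) : ℝ :=
  Real.log x - l * γ * (Real.exp (l * γ⁻¹ * (x - 1)) - 1)

variable {γ l x : ℝ}

theorem residual_one_right : residual γ l 1 = 0 := by simp [residual]

theorem strictConcaveOn_residual (h : 0 ≤ l * γ) : StrictConcaveOn ℝ (Ioi 0) (residual γ l) := by
  have hexp : ConvexOn ℝ univ fun x : ℝ => Real.exp (l * γ⁻¹ * (x - 1)) := by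
    simpa [Function.comp_def] using convexOn_exp.comp_affineMap
      ((l * γ⁻¹) • (AffineMap.id ℝ ℝ - AffineMap.const ℝ ℝ (1 : ℝ)))
  have hconc := ((hexp.sub (concaveOn_const 1 convex_univ)).smul h).neg
  exact strictConcaveOn_log_Ioi.add_concaveOn (hconc.subset (subset_univ _) (convex_Ioi 0))
    |>.congr fun x _ => by simp [residual, sub_eq_add_neg]

theorem strictMonoOn_residual_left (hγ : 0 < γ) (hx : x < 1) :
    StrictMonoOn (fun l => residual γ l x) (Ioi 0) := by
  intro l (hl : 0 < l) m _ hlm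
  have hexp : Real.exp (m * γ⁻¹ * (x - 1)) < Real.exp (l * γ⁻¹ * (x - 1)) :=
    exp_lt_exp.2 (mul_lt_mul_of_neg_right (mul_lt_mul_of_pos_right hlm (inv_pos.2 hγ))
      (by linarith))
  have hexp1 : Real.exp (l * γ⁻¹ * (x - 1)) < 1 :=
    Real.exp_lt_one_iff.2 (mul_neg_of_pos_of_neg (by positivity) (by linarith))
  have := mul_lt_mul'' (mul_lt_mul_of_pos_right hlm hγ) (sub_lt_sub_left hexp 1)
    (by positivity) (by linarith)
  simp only [residual]
  linarith

theorem residual_one_left_neg (hγ : 0 < γ) (hx : x ∈ Ioo 0 1) : residual γ 1 x < 0 := by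
  have hlog := log_le_sub_one_of_pos hx.1
  have hexp := add_one_lt_exp (mul_neg_of_pos_of_neg (inv_pos.2 hγ) (sub_neg.2 hx.2)).ne
  have := mul_lt_mul_of_pos_left hexp hγ
  rw [mul_add, mul_one, mul_inv_cancel_left₀ hγ.ne'] at this
  simp only [residual, one_mul]
  linarith

theorem hasDerivAt_residual_right (hγ : γ ≠ 0) (hx : x ≠ 0) :
    HasDerivAt (residual γ l) (x⁻¹ - l ^ 2 * Real.exp (l * γ⁻¹ * (x - 1))) x := by
  have := (hasDerivAt_log hx).sub
    ((((hasDerivAt_id x).sub_const 1).const_mul (l * γ⁻¹)).exp.sub_const 1 |>.const_mul (l * γ))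
  exact this.congr_deriv (by simp only [id]; field_simp)

theorem contDiffAt_residual_uncurry (hx : x ≠ 0) :
    ContDiffAt ℝ 1 (fun p : ℝ × ℝ => residual γ p.1 p.2) (l, x) := by
  unfold residual
  exact (contDiffAt_snd.log hx).sub (by fun_prop)

theorem continuous_residual_left : Continuous fun l => residual γ l x := by
  unfold residual
  fun_prop

def IsSolution (γ : ℝ) (q₁ q₂ : ℝ → ℝ) : Prop :=
  ∀ lam, 1 < lam →
    q₁ lam ∈ Set.Ioo (0:ℝ) 1 ∧ q₂ lam ∈ Set.Ioo (0:ℝ) 1 ∧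
    q₁ lam = Real.exp (lam * γ * (q₂ lam - 1)) ∧
    q₂ lam = Real.exp (lam * γ⁻¹ * (q₁ lam - 1))

namespace IsSolution

variable {q₁ q₂ : ℝ → ℝ}

theorem swap (h : IsSolution γ q₁ q₂) : IsSolution γ⁻¹ q₂ q₁ := fun l hl =>
  let ⟨h₁, h₂, e₁, e₂⟩ := h l hl
  ⟨h₂, h₁, e₂, by rwa [inv_inv]⟩

theorem residual_eq_zero (h : IsSolution γ q₁ q₂) (hl : 1 < l) : residual γ l (q₁ l) = 0 := by
  obtain ⟨-, -, e₁, e₂⟩ := h l hl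
  rw [residual, ← e₂]
  nth_rw 1 [e₁]
  rw [log_exp]
  ring

variable (h : IsSolution γ q₁ q₂) (hγ : 0 < γ)
include h hγ

theorem pos_residual_iff (hl : 1 < l) (hx : x ∈ Ioo 0 1) :
    0 < residual γ l x ↔ q₁ l < x :=
  (strictConcaveOn_residual (by positivity)).pos_iff_of_eq_zero hx.1 (h l hl).1.1
    (mem_Ioi.2 one_pos) hx.2 (h l hl).1.2 (h.residual_eq_zero hl) residual_one_right

theorem residual_neg_iff (hl : 1 < l) (hx : x ∈ Ioo 0 1) :
    residual γ l x < 0 ↔ x < q₁ l :=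
  (strictConcaveOn_residual (by positivity)).neg_iff_of_eq_zero hx.1 (h l hl).1.1
    (mem_Ioi.2 one_pos) hx.2 (h l hl).1.2 (h.residual_eq_zero hl) residual_one_right

theorem eq_of_residual_eq_zero (hl : 1 < l) (hx : x ∈ Ioo 0 1) (hres : residual γ l x = 0) :
    x = q₁ l :=
  le_antisymm (not_lt.1 fun hlt => ((h.pos_residual_iff hγ hl hx).2 hlt).ne' hres)
    (not_lt.1 fun hlt => ((h.residual_neg_iff hγ hl hx).2 hlt).ne hres)

theorem strictAntiOn : StrictAntiOn q₁ (Ioi 1) := by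
  intro l (hl : 1 < l) m (hm : 1 < m) hlm
  have hlt : residual γ l (q₁ l) < residual γ m (q₁ l) :=
    strictMonoOn_residual_left hγ (h l hl).1.2 (zero_lt_one.trans hl) (zero_lt_one.trans hm) hlm
  rw [h.residual_eq_zero hl] at hlt
  exact (h.pos_residual_iff hγ hm (h l hl).1).1 hlt

theorem tendsto_nhdsGT_one : Tendsto q₁ (𝓝[>] 1) (𝓝 1) := by
  refine tendsto_order.2 ⟨fun a ha => ?_, fun b hb => ?_⟩
  · rcases le_or_gt a 0 with ha0 | ha0
    · filter_upwards [self_mem_nhdsWithin] with l hl using ha0.trans_lt (h l hl).1.1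
    · have hneg : ∀ᶠ l in 𝓝 1, residual γ l a < 0 :=
        continuous_residual_left.continuousAt.eventually_lt continuousAt_const
          (residual_one_left_neg hγ ⟨ha0, ha⟩)
      filter_upwards [self_mem_nhdsWithin, nhdsWithin_le_nhds hneg] with l hl hla
      exact (h.residual_neg_iff hγ hl ⟨ha0, ha⟩).1 hla
  · filter_upwards [self_mem_nhdsWithin] with l hl using (h l hl).1.2.trans hb

theorem differentiableAt (hl : 1 < l) : DifferentiableAt ℝ q₁ l := by
  obtain ⟨hx, hy, e₁, e₂⟩ := h l hl
  have hprod := mul_mul_mul_lt_one_of_eq_exp (by positivity) (by positivity) hx.2 hy.2 e₁ e₂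
  rw [mul_mul_mul_comm, mul_inv_cancel₀ hγ.ne', mul_one] at hprod
  have hd := hasDerivAt_residual_right (l := l) hγ.ne' hx.1.ne'
  have hd0 : (q₁ l)⁻¹ - l ^ 2 * Real.exp (l * γ⁻¹ * (q₁ l - 1)) ≠ 0 := by
    have hx0 := hx.1.ne'
    rw [← e₂, show (q₁ l)⁻¹ - l ^ 2 * q₂ l = (q₁ l)⁻¹ * (1 - l * l * q₁ l * q₂ l) by
      field_simp]
    exact (mul_pos (inv_pos.2 hx.1) (sub_pos.2 hprod)).ne'
  have hF := (contDiffAt_residual_uncurry (γ := γ) (l := l) hx.1.ne').hasStrictFDerivAt one_ne_zero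
  refine hF.differentiableAt_of_unique_zero
    (isInvertible_comp_inr_of_hasDerivAt hF.hasFDerivAt hd hd0) (Ioo_mem_nhds hx.1 hx.2) ?_
  filter_upwards [Ioi_mem_nhds hl] with m hm y hy hres
  rw [h.residual_eq_zero hl] at hres
  exact h.eq_of_residual_eq_zero hγ hm hy hres

theorem tendsto_atTop : Tendsto q₁ atTop (𝓝 0) := by
  have hanti := h.swap.strictAntiOn (inv_pos.2 hγ)
  refine (tendsto_exp_mul_mul_sub_one_atTop (g := q₂) hγ (h 2 one_lt_two).2.1.2 ?_).congr' ?_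
  · filter_upwards [eventually_gt_atTop 2] with l hl
    exact (hanti (mem_Ioi.2 one_lt_two) (mem_Ioi.2 (one_lt_two.trans hl)) hl).le
  · filter_upwards [eventually_gt_atTop 1] with l hl using ((h l hl).2.2.1).symm

theorem isLittleO_nhdsGT_one :
    (fun lam => (q₁ lam - 1) - γ * (q₂ lam - 1)) =o[𝓝[>] 1] fun lam => |q₂ lam - 1| := by
  have hq₂ : Tendsto (fun lam => q₂ lam - 1) (𝓝[>] 1) (𝓝 0) := by
    simpa using (h.swap.tendsto_nhdsGT_one (inv_pos.2 hγ)).sub_const 1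
  refine isLittleO_abs_right.2 <| (isLittleO_exp_mul_mul_sub_one_sub γ
    (tendsto_id.mono_left nhdsWithin_le_nhds) hq₂).congr' ?_ EventuallyEq.rfl
  filter_upwards [self_mem_nhdsWithin] with l hl
  rw [id, ← (h l hl).2.2.1]

end IsSolution

end FixedPointSystem

theorem statement_7_general (θ : ℝ) (hθ : θ ∈ Set.Ioo (0:ℝ) 1)
    (γ : ℝ) (hγ : γ = Real.sqrt ((1 - θ) / θ))
    (q₁ q₂ : ℝ → ℝ)
    (hsol : ∀ lam, 1 < lam →
      q₁ lam ∈ Set.Ioo (0:ℝ) 1 ∧ q₂ lam ∈ Set.Ioo (0:ℝ) 1 ∧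
      q₁ lam = Real.exp (lam * γ * (q₂ lam - 1)) ∧
      q₂ lam = Real.exp (lam * γ⁻¹ * (q₁ lam - 1))) :
    -- (i)
    ((∀ lam ∈ Set.Ioi (1:ℝ), DifferentiableAt ℝ q₁ lam) ∧
     (∀ lam ∈ Set.Ioi (1:ℝ), DifferentiableAt ℝ q₂ lam) ∧
     StrictAntiOn q₁ (Set.Ioi 1) ∧ StrictAntiOn q₂ (Set.Ioi 1) ∧
     Tendsto q₁ (nhdsWithin 1 (Set.Ioi 1)) (nhds 1) ∧
     Tendsto q₂ (nhdsWithin 1 (Set.Ioi 1)) (nhds 1) ∧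
     Tendsto q₁ atTop (nhds 0) ∧ Tendsto q₂ atTop (nhds 0)) ∧
    -- (ii)
    (fun lam => (q₁ lam - 1) - γ * (q₂ lam - 1)) =o[nhdsWithin 1 (Set.Ioi 1)]
      (fun lam => |q₂ lam - 1|) := by
  have hγ₀ : 0 < γ := hγ ▸ Real.sqrt_pos.2 (div_pos (sub_pos.2 hθ.2) hθ.1)
  have h : FixedPointSystem.IsSolution γ q₁ q₂ := hsol
  have hs := h.swap
  have hγ₀' := inv_pos.2 hγ₀
  exact ⟨⟨fun _ hl => h.differentiableAt hγ₀ hl, fun _ hl => hs.differentiableAt hγ₀' hl,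
    h.strictAntiOn hγ₀, hs.strictAntiOn hγ₀', h.tendsto_nhdsGT_one hγ₀,
    hs.tendsto_nhdsGT_one hγ₀', h.tendsto_atTop hγ₀, hs.tendsto_atTop hγ₀'⟩,
    h.isLittleO_nhdsGT_one hγ₀⟩

/-- Lemma `lem: solv'`: let `γ_θ = √((1−θ)/θ)` and, for `λ > 1`, let
`(q₁(λ), q₂(λ))` be the unique solution in `(0,1)²` of the fixed-point system
`x = e^{λγ(y−1)}`, `y = e^{λγ⁻¹(x−1)}`. Then each `q_i` is differentiable and strictly
decreasing on `(1,∞)`, with `q_i(1+) = 1` and `q_i(∞) = 0`; moreover, as `λ → 1+`,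
`q₁(λ) − 1 = γ_θ (q₂(λ) − 1) + o(|q₂(λ) − 1|)`. -/
theorem statement_7 (θ : ℝ) (hθ : θ ∈ Set.Ioo (0:ℝ) 1)
    (γ : ℝ) (hγ : γ = Real.sqrt ((1 - θ) / θ))
    (q₁ q₂ : ℝ → ℝ)
    (hsol : ∀ lam, 1 < lam →
      q₁ lam ∈ Set.Ioo (0:ℝ) 1 ∧ q₂ lam ∈ Set.Ioo (0:ℝ) 1 ∧
      q₁ lam = Real.exp (lam * γ * (q₂ lam - 1)) ∧
      q₂ lam = Real.exp (lam * γ⁻¹ * (q₁ lam - 1)))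
    (huniq : ∀ lam, 1 < lam → ∀ x y : ℝ, x ∈ Set.Ioo (0:ℝ) 1 → y ∈ Set.Ioo (0:ℝ) 1 →
      x = Real.exp (lam * γ * (y - 1)) → y = Real.exp (lam * γ⁻¹ * (x - 1)) →
      x = q₁ lam ∧ y = q₂ lam) :
    -- (i)
    ((∀ lam ∈ Set.Ioi (1:ℝ), DifferentiableAt ℝ q₁ lam) ∧
     (∀ lam ∈ Set.Ioi (1:ℝ), DifferentiableAt ℝ q₂ lam) ∧
     StrictAntiOn q₁ (Set.Ioi 1) ∧ StrictAntiOn q₂ (Set.Ioi 1) ∧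
     Tendsto q₁ (nhdsWithin 1 (Set.Ioi 1)) (nhds 1) ∧
     Tendsto q₂ (nhdsWithin 1 (Set.Ioi 1)) (nhds 1) ∧
     Tendsto q₁ atTop (nhds 0) ∧ Tendsto q₂ atTop (nhds 0)) ∧
    -- (ii)
    (fun lam => (q₁ lam - 1) - γ * (q₂ lam - 1)) =o[nhdsWithin 1 (Set.Ioi 1)]
      (fun lam => |q₂ lam - 1|) :=
  statement_7_general θ hθ γ hγ q₁ q₂ hsol
end

section
/- Let θ ∈ (0,1), γ_θ = √((1−θ)/θ), α_θ = (θ(1−θ))^{−1/2}, and for λ > 1 define ℓ(λ) = θ(1−q_1(λ)) + (1−θ)(1−q_2(λ)) and ρ(λ) = θ(1−q_1(λ))/ℓ(λ). Then: (i) for each λ > 1, (ℓ(λ), ρ(λ)) is the unique solution in (0,∞)² of the system ρℓ = θ(1 − e^{−α_θ λ (1−ρ) ℓ}), (1−ρ)ℓ = (1−θ)(1 − e^{−α_θ λ ρ ℓ}), and moreover ℓ(λ) ∈ (0,1) and ρ(λ) ∈ (0,1); (ii) λ ↦ ℓ(λ) is differentiable and strictly increasing on (1,∞) with ℓ(λ)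 → 0 as λ → 1+ and ℓ(λ) → 1 as λ → ∞, hence ℓ is a bijection from (1,∞) to (0,1); (iii) ρ(λ) → (1+γ_θ)^{−1} as λ → 1+. -/
/-!
For `λ > 1` put `a = λγ`, `b = λγ⁻¹` and `G x = exp (a (exp (b (x - 1)) - 1))`. Then `q₁(λ)` is a
fixed point of `G` in `(0,1)`, `G 1 = 1`, and `G` is strictly convex. Convexity decides everything:
`G x < x` strictly between the two fixed points and `G x > x` below `q₁`, so the fixed point in
`(0,1)` is unique, and `G'(q₁) = λ² q₂ q₁` is less than the slope `1` of the chord, which is what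
the implicit function theorem needs. As `G` decreases in `λ`, `q₁` is strictly decreasing; at
`λ = 1` we have `G x > x` on `(-∞,1)`, whence `q₁ → 1` as `λ → 1+`. Exchanging `(q₁, γ)` with
`(q₂, γ⁻¹)` gives the same facts for `q₂`.

Since `α (1 - θ) = γ` and `α θ = γ⁻¹`, the substitution `ρℓ = θ (1 - q₁)`,
`(1 - ρ) ℓ = (1 - θ) (1 - q₂)` turns the fixed-point system into the `(ℓ, ρ)` system, and
`ρ → (1 + γ)⁻¹` comes from `(1 - q₂) / (1 - q₁) → γ⁻¹`, a difference quotient of `exp` at `0`.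
-/

open Filter Set Real Topology

namespace StrictConvexOn

variable {𝕜 : Type*} [Field 𝕜] [LinearOrder 𝕜] [IsStrictOrderedRing 𝕜] {s : Set 𝕜} {f : 𝕜 → 𝕜}
  {p r x : 𝕜}

theorem apply_lt_self_of_mem_Ioo (hf : StrictConvexOn 𝕜 s f) (hp : p ∈ s) (hr : r ∈ s)
    (hfp : f p = p) (hfr : f r = r) (hx : x ∈ Ioo p r) : f x < x := by
  have hpr := hx.1.trans hx.2
  have := (hf.sub_concaveOn (concaveOn_id hf.1)).lt_on_openSegment hp hr hpr.ne
    (by rwa [openSegment_eq_Ioo hpr])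
  simp only [Pi.sub_apply, id, hfp, hfr, sub_self, max_self] at this
  linarith

theorem self_lt_apply_of_lt (hf : StrictConvexOn 𝕜 s f) (hr : r ∈ s) (hpr : p < r)
    (hfp : f p = p) (hfr : f r = r) (hx : x ∈ s) (hxp : x < p) : x < f x := by
  have := (hf.sub_concaveOn (concaveOn_id hf.1)).lt_on_openSegment hx hr (hxp.trans hpr).ne
    (by rw [openSegment_eq_Ioo (hxp.trans hpr)]; exact ⟨hxp, hpr⟩)
  simp only [Pi.sub_apply, id, hfp, hfr, sub_self, lt_max_iff, lt_self_iff_false, or_false] at this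
  linarith

theorem lt_of_apply_lt_self (hf : StrictConvexOn 𝕜 s f) (hp : p ∈ s) (hr : r ∈ s) (hpr : p < r)
    (hfp : f p = p) (hfr : f r = r) (hx : x ∈ s) (hfx : f x < x) : p < x := by
  by_contra! hxp
  rcases hxp.lt_or_eq with hxp | rfl
  · exact hfx.not_gt (hf.self_lt_apply_of_lt hr hpr hfp hfr hx hxp)
  · exact hfx.ne hfp

theorem lt_of_self_lt_apply (hf : StrictConvexOn 𝕜 s f) (hp : p ∈ s) (hr : r ∈ s)
    (hfp : f p = p) (hfr : f r = r) (hxr : x < r) (hfx : x < f x) : x < p := by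
  by_contra! hpx
  rcases hpx.lt_or_eq with hpx | rfl
  · exact hfx.not_gt (hf.apply_lt_self_of_mem_Ioo hp hr hfp hfr ⟨hpx, hxr⟩)
  · exact hfx.ne' hfp

theorem eq_of_apply_eq_self (hf : StrictConvexOn 𝕜 s f) (hp : p ∈ s) (hr : r ∈ s) (hpr : p < r)
    (hfp : f p = p) (hfr : f r = r) (hx : x ∈ s) (hxr : x < r) (hfx : f x = x) : x = p :=
  le_antisymm (not_lt.1 fun hpx => (hf.apply_lt_self_of_mem_Ioo hp hr hfp hfr ⟨hpx, hxr⟩).ne hfx)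
    (not_lt.1 fun hxp => (hf.self_lt_apply_of_lt hr hpr hfp hfr hx hxp).ne' hfx)

end StrictConvexOn

section ImplicitFunction

variable {𝕜 : Type*} [NontriviallyNormedField 𝕜]
  {E₁ : Type*} [NormedAddCommGroup E₁] [NormedSpace 𝕜 E₁] [CompleteSpace E₁]
  {E₂ : Type*} [NormedAddCommGroup E₂] [NormedSpace 𝕜 E₂] [CompleteSpace E₂]
  {F : Type*} [NormedAddCommGroup F] [NormedSpace 𝕜 F] [CompleteSpace F]

theorem HasStrictFDerivAt.differentiableAt_of_eventually_eq_imp {f : E₁ × E₂ → F}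
    {f' : E₁ × E₂ →L[𝕜] F} {u : E₁ × E₂} {q : E₁ → E₂} (hf : HasStrictFDerivAt f f' u)
    (hf₂ : (f' ∘L .inr 𝕜 E₁ E₂).IsInvertible) (hq : ∀ᶠ v in 𝓝 u, f v = f u → v.2 = q v.1) :
    DifferentiableAt 𝕜 q u.1 := by
  have hψ : Tendsto (fun x => (x, hf.implicitFunctionOfProdDomain hf₂ x)) (𝓝 u.1) (𝓝 u) :=
    tendsto_id.prodMk_nhds (hf.tendsto_implicitFunctionOfProdDomain hf₂)
  have hqψ : q =ᶠ[𝓝 u.1] hf.implicitFunctionOfProdDomain hf₂ := by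
    filter_upwards [hψ.eventually hq, hf.eventually_apply_implicitFunctionOfProdDomain hf₂]
      with x hx hfx
    exact (hx hfx).symm
  exact (hf.hasStrictFDerivAt_implicitFunctionOfProdDomain hf₂).differentiableAt
    |>.congr_of_eventuallyEq hqψ

end ImplicitFunction

theorem ContDiffAt.differentiableAt_of_eventually_eq_imp {f : ℝ × ℝ → ℝ} {u : ℝ × ℝ} {c : ℝ}
    {q : ℝ → ℝ} (hf : ContDiffAt ℝ 1 f u) (hc : HasDerivAt (fun y => f (u.1, y)) c u.2)
    (hc₀ : c ≠ 0) (hq : ∀ᶠ v in 𝓝 u, f v = f u → v.2 = q v.1) :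
    DifferentiableAt ℝ q u.1 := by
  have hf' := hf.hasStrictFDerivAt one_ne_zero
  have hpartial : fderiv ℝ f u ∘L .inr ℝ ℝ ℝ = .smulRight 1 c :=
    (hf'.hasFDerivAt.comp u.2 (hasFDerivAt_prodMk_right u.1 u.2)).unique hc.hasFDerivAt
  refine hf'.differentiableAt_of_eventually_eq_imp ⟨.unitsEquivAut ℝ (.mk0 c hc₀), ?_⟩ hq
  rw [hpartial]
  ext
  simp

theorem StrictMonoOn.bijOn_Ioi_Ioo {f : ℝ → ℝ} {a c d : ℝ} (hf : StrictMonoOn f (Ioi a))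
    (hcont : ContinuousOn f (Ioi a)) (hc : Tendsto f (𝓝[>] a) (𝓝 c))
    (hd : Tendsto f atTop (𝓝 d)) : BijOn f (Ioi a) (Ioo c d) := by
  refine ⟨fun x hx => ⟨?_, ?_⟩, hf.injOn, fun y hy => ?_⟩
  · obtain ⟨z, hz⟩ := exists_between (mem_Ioi.1 hx)
    refine (le_of_tendsto hc ?_).trans_lt (hf hz.1 hx hz.2)
    filter_upwards [Ioo_mem_nhdsGT hz.1] with w hw
    exact (hf hw.1 hz.1 hw.2).le
  · obtain ⟨z, hz⟩ := exists_gt x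
    have hz' : z ∈ Ioi a := (mem_Ioi.1 hx).trans hz
    refine (hf hx hz' hz).trans_le (ge_of_tendsto hd ?_)
    filter_upwards [eventually_gt_atTop z] with w hw
    exact (hf hz' (hz'.trans hw) hw).le
  · obtain ⟨x₀, hx₀, hx₀a⟩ :=
      ((hc.eventually (eventually_lt_nhds hy.1)).and self_mem_nhdsWithin).exists
    obtain ⟨x₁, hx₁, hx₀₁⟩ :=
      ((hd.eventually (eventually_gt_nhds hy.2)).and (eventually_gt_atTop x₀)).exists
    obtain ⟨x, hx, rfl⟩ :=
      intermediate_value_Ioo hx₀₁.le (hcont.mono fun z hz => hx₀a.trans_le hz.1) ⟨hx₀, hx₁⟩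
    exact ⟨x, mem_Ioi.2 ((mem_Ioi.1 hx₀a).trans hx.1), rfl⟩

noncomputable def fixedPointMap (a b x : ℝ) : ℝ := exp (a * (exp (b * (x - 1)) - 1))

def IsFixedPair (a b x y : ℝ) : Prop :=
  x ∈ Ioo 0 1 ∧ y ∈ Ioo 0 1 ∧ x = exp (a * (y - 1)) ∧ y = exp (b * (x - 1))

namespace fixedPointMap

variable {a b x : ℝ}

theorem apply_one : fixedPointMap a b 1 = 1 := by simp [fixedPointMap]

theorem hasDerivAt :
    HasDerivAt (fixedPointMap a b) (a * b * exp (b * (x - 1)) * fixedPointMap a b x) x := by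
  unfold fixedPointMap
  convert ((((hasDerivAt_id' x).sub_const 1).const_mul b).exp.sub_const 1).const_mul a |>.exp
    using 1
  ring

theorem strictConvexOn (ha : 0 < a) (hb : 0 < b) :
    StrictConvexOn ℝ univ (fixedPointMap a b) := by
  refine StrictMono.strictConvexOn_univ_of_deriv (by unfold fixedPointMap; fun_prop) ?_
  rw [funext fun x => (hasDerivAt (a := a) (b := b) (x := x)).deriv]
  intro x y hxy
  have h₁ : exp (b * (x - 1)) < exp (b * (y - 1)) := exp_lt_exp.2 (by gcongr)
  have h₂ : fixedPointMap a b x < fixedPointMap a b y := exp_lt_exp.2 (by gcongr)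
  exact mul_lt_mul'' (mul_lt_mul_of_pos_left h₁ (by positivity)) h₂ (by positivity) (exp_pos _).le

end fixedPointMap

namespace IsFixedPair

variable {a b x y z : ℝ}

theorem symm (h : IsFixedPair a b x y) : IsFixedPair b a y x := ⟨h.2.1, h.1, h.2.2.2, h.2.2.1⟩

theorem pos_left (h : IsFixedPair a b x y) : 0 < a := by
  have hx : exp (a * (y - 1)) < 1 := h.2.2.1 ▸ h.1.2
  exact pos_of_mul_neg_left (exp_lt_one_iff.1 hx) (by linarith [h.2.1.2])

theorem pos_right (h : IsFixedPair a b x y) : 0 < b := h.symm.pos_left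

theorem fixedPointMap_eq (h : IsFixedPair a b x y) : fixedPointMap a b x = x := by
  rw [fixedPointMap, ← h.2.2.2, ← h.2.2.1]

theorem strictConvexOn_fixedPointMap (h : IsFixedPair a b x y) :
    StrictConvexOn ℝ univ (fixedPointMap a b) :=
  fixedPointMap.strictConvexOn h.pos_left h.pos_right

theorem lt_of_fixedPointMap_lt (h : IsFixedPair a b x y) (hz : fixedPointMap a b z < z) : x < z :=
  h.strictConvexOn_fixedPointMap.lt_of_apply_lt_self trivial trivial h.1.2
    h.fixedPointMap_eq fixedPointMap.apply_one trivial hz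

theorem lt_of_lt_fixedPointMap (h : IsFixedPair a b x y) (hz₁ : z < 1)
    (hz : z < fixedPointMap a b z) : z < x :=
  h.strictConvexOn_fixedPointMap.lt_of_self_lt_apply trivial trivial
    h.fixedPointMap_eq fixedPointMap.apply_one hz₁ hz

theorem eq_of_fixedPointMap_eq (h : IsFixedPair a b x y) (hz₁ : z < 1)
    (hz : fixedPointMap a b z = z) : z = x :=
  h.strictConvexOn_fixedPointMap.eq_of_apply_eq_self trivial trivial h.1.2
    h.fixedPointMap_eq fixedPointMap.apply_one trivial hz₁ hz

theorem unique {x' y' : ℝ} (h : IsFixedPair a b x y) (h' : IsFixedPair a b x' y') :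
    x' = x ∧ y' = y := by
  have hx := h.eq_of_fixedPointMap_eq h'.1.2 h'.fixedPointMap_eq
  exact ⟨hx, by rw [h.2.2.2, h'.2.2.2, hx]⟩

theorem mul_mul_lt_one (h : IsFixedPair a b x y) : a * b * y * x < 1 := by
  have := h.strictConvexOn_fixedPointMap.lt_slope_of_hasDerivAt trivial trivial h.1.2
    fixedPointMap.hasDerivAt
  rwa [slope_def_field, fixedPointMap.apply_one, h.fixedPointMap_eq,
    div_self (sub_ne_zero.2 h.1.2.ne'), ← h.2.2.2] at this

end IsFixedPair

theorem strictAntiOn_fixedPointMap {γ x : ℝ} (hγ : 0 < γ) (hx : x < 1) :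
    StrictAntiOn (fun lam => fixedPointMap (lam * γ) (lam * γ⁻¹) x) (Ioi 0) := by
  intro l hl l' hl' hll'
  have hγ' := inv_pos.2 hγ
  have h₁ : exp (l' * γ⁻¹ * (x - 1)) < exp (l * γ⁻¹ * (x - 1)) :=
    exp_lt_exp.2 (by nlinarith [mul_pos (sub_pos.2 hll') hγ'])
  have h₂ : exp (l * γ⁻¹ * (x - 1)) < 1 :=
    exp_lt_one_iff.2 (mul_neg_of_pos_of_neg (mul_pos hl hγ') (by linarith))
  refine exp_lt_exp.2 ?_
  nlinarith [mul_pos (mul_pos (mem_Ioi.1 hl') hγ) (sub_pos.2 h₁),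
    mul_pos (mul_pos (sub_pos.2 hll') hγ) (sub_pos.2 h₂)]

theorem lt_fixedPointMap_of_mul_eq_one {a b x : ℝ} (ha : 0 < a) (hab : a * b = 1)
    (hx : x ≠ 1) : x < fixedPointMap a b x := by
  have h : b * (x - 1) + 1 < exp (b * (x - 1)) :=
    add_one_lt_exp (mul_ne_zero (by rintro rfl; simp at hab) (sub_ne_zero.2 hx))
  have h' : a * (b * (x - 1)) < a * (exp (b * (x - 1)) - 1) :=
    mul_lt_mul_of_pos_left (by linarith) ha
  rw [← mul_assoc, hab, one_mul] at h'
  calc x ≤ exp (x - 1) := by linarith [add_one_le_exp (x - 1)]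
    _ < fixedPointMap a b x := exp_lt_exp.2 h'

def IsFixedPairFamily (γ : ℝ) (q₁ q₂ : ℝ → ℝ) : Prop :=
  ∀ lam, 1 < lam → IsFixedPair (lam * γ) (lam * γ⁻¹) (q₁ lam) (q₂ lam)

namespace IsFixedPairFamily

variable {γ : ℝ} {q₁ q₂ : ℝ → ℝ}

theorem swap (h : IsFixedPairFamily γ q₁ q₂) : IsFixedPairFamily γ⁻¹ q₂ q₁ := by
  simpa only [IsFixedPairFamily, inv_inv] using fun lam hlam => (h lam hlam).symm

theorem pos (h : IsFixedPairFamily γ q₁ q₂) : 0 < γ :=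
  pos_of_mul_pos_right (h 2 one_lt_two).pos_left zero_le_two

theorem strictAntiOn (h : IsFixedPairFamily γ q₁ q₂) : StrictAntiOn q₁ (Ioi 1) := by
  intro l hl l' hl' hll'
  have hG :
      fixedPointMap (l' * γ) (l' * γ⁻¹) (q₁ l) < fixedPointMap (l * γ) (l * γ⁻¹) (q₁ l) :=
    strictAntiOn_fixedPointMap h.pos (h l hl).1.2 (mem_Ioi.2 (zero_lt_one.trans hl))
      (mem_Ioi.2 (zero_lt_one.trans hl')) hll'
  rw [(h l hl).fixedPointMap_eq] at hG
  exact (h l' hl').lt_of_fixedPointMap_lt hG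

theorem tendsto_atTop (h : IsFixedPairFamily γ q₁ q₂) : Tendsto q₁ atTop (𝓝 0) := by
  have hc : γ * (q₂ 2 - 1) < 0 :=
    mul_neg_of_pos_of_neg h.pos (by linarith [(h 2 one_lt_two).2.1.2])
  refine tendsto_of_tendsto_of_tendsto_of_le_of_le' tendsto_const_nhds
    (tendsto_exp_atBot.comp (tendsto_id.atTop_mul_const_of_neg hc)) ?_ ?_
  · filter_upwards [eventually_gt_atTop 1] with lam hlam using (h lam hlam).1.1.le
  · -- `q₁ λ = exp (λγ (q₂ λ - 1)) ≤ exp (λγ (q₂ 2 - 1))` for `λ > 2`, as `q₂` decreases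
    filter_upwards [eventually_gt_atTop 2] with lam hlam
    rw [(h lam (one_lt_two.trans hlam)).2.2.1, Function.comp_apply, id, ← mul_assoc]
    refine exp_le_exp.2 (mul_le_mul_of_nonneg_left ?_ (mul_pos (by linarith) h.pos).le)
    linarith [h.swap.strictAntiOn (mem_Ioi.2 one_lt_two) (mem_Ioi.2 (one_lt_two.trans hlam))
      hlam]

theorem tendsto_nhdsGT_one (h : IsFixedPairFamily γ q₁ q₂) : Tendsto q₁ (𝓝[>] 1) (𝓝 1) := by
  refine tendsto_order.2 ⟨fun b hb => ?_, fun b hb => ?_⟩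
  · have hcont : ContinuousAt (fun lam => fixedPointMap (lam * γ) (lam * γ⁻¹) b) 1 := by
      unfold fixedPointMap; fun_prop
    have h₁ : b < fixedPointMap (1 * γ) (1 * γ⁻¹) b := by
      rw [one_mul, one_mul]
      exact lt_fixedPointMap_of_mul_eq_one h.pos (mul_inv_cancel₀ h.pos.ne') hb.ne
    filter_upwards [nhdsWithin_le_nhds (hcont.eventually (eventually_gt_nhds h₁)),
      self_mem_nhdsWithin] with lam hb' hlam
    exact (h lam hlam).lt_of_lt_fixedPointMap hb hb'
  · filter_upwards [self_mem_nhdsWithin] with lam hlam using (h lam hlam).1.2.trans hb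

theorem differentiableAt (h : IsFixedPairFamily γ q₁ q₂) {lam : ℝ} (hlam : 1 < lam) :
    DifferentiableAt ℝ q₁ lam := by
  have hq := h lam hlam
  let F : ℝ × ℝ → ℝ := fun v => fixedPointMap (v.1 * γ) (v.1 * γ⁻¹) v.2 - v.2
  have hF : F (lam, q₁ lam) = 0 := sub_eq_zero.2 hq.fixedPointMap_eq
  have hpartial : HasDerivAt (fun y => F (lam, y))
      (lam * γ * (lam * γ⁻¹) * q₂ lam * q₁ lam - 1) (q₁ lam) := by
    have := (fixedPointMap.hasDerivAt (a := lam * γ) (b := lam * γ⁻¹)).sub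
      (hasDerivAt_id' (q₁ lam))
    rwa [hq.fixedPointMap_eq, ← hq.2.2.2] at this
  refine ContDiffAt.differentiableAt_of_eventually_eq_imp (u := (lam, q₁ lam))
    (by unfold F fixedPointMap; fun_prop) hpartial (sub_ne_zero.2 hq.mul_mul_lt_one.ne) ?_
  filter_upwards [(isOpen_Ioi.prod isOpen_Iio).mem_nhds ⟨hlam, hq.1.2⟩] with v hv hFv
  rw [hF] at hFv
  exact (h v.1 hv.1).eq_of_fixedPointMap_eq hv.2 (sub_eq_zero.1 hFv)

theorem tendsto_one_sub_div_one_sub (h : IsFixedPairFamily γ q₁ q₂) :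
    Tendsto (fun lam => (1 - q₂ lam) / (1 - q₁ lam)) (𝓝[>] 1) (𝓝 γ⁻¹) := by
  have hlam : Tendsto (fun lam : ℝ => lam * γ⁻¹) (𝓝[>] 1) (𝓝 γ⁻¹) := by
    simpa using ((continuous_id.tendsto (1:ℝ)).mono_left nhdsWithin_le_nhds).mul_const γ⁻¹
  have hs : Tendsto (fun lam => lam * γ⁻¹ * (q₁ lam - 1)) (𝓝[>] 1) (𝓝[≠] 0) := by
    refine tendsto_nhdsWithin_iff.2
      ⟨by simpa using hlam.mul (h.tendsto_nhdsGT_one.sub_const 1), ?_⟩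
    filter_upwards [self_mem_nhdsWithin] with lam hlam
    exact mul_ne_zero (h lam hlam).pos_right.ne' (sub_ne_zero.2 (h lam hlam).1.2.ne)
  have := hlam.mul ((hasDerivAt_exp 0).tendsto_slope_zero.comp hs)
  rw [exp_zero, mul_one] at this
  refine this.congr' ?_
  filter_upwards [self_mem_nhdsWithin] with lam hlam
  have hq₁ : q₁ lam - 1 ≠ 0 := sub_ne_zero.2 (h lam hlam).1.2.ne
  have hq₁' : 1 - q₁ lam ≠ 0 := sub_ne_zero.2 (h lam hlam).1.2.ne'
  have hlam₀ : lam ≠ 0 := (zero_lt_one.trans hlam).ne'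
  have hγ₀ : γ ≠ 0 := h.pos.ne'
  simp only [Function.comp_apply, zero_add, smul_eq_mul, ← (h lam hlam).2.2.2]
  field_simp
  ring

end IsFixedPairFamily

theorem one_div_sqrt_mul_eq {θ : ℝ} (hθ : θ ∈ Ioo 0 1) :
    1 / √(θ * (1 - θ)) * (1 - θ) = √((1 - θ) / θ) ∧
      1 / √(θ * (1 - θ)) * θ = (√((1 - θ) / θ))⁻¹ := by
  obtain ⟨hθ₀, hθ₁⟩ := hθ
  have hθ₁' : 0 < 1 - θ := sub_pos.2 hθ₁
  have hs2 : √(θ * (1 - θ)) ^ 2 = θ * (1 - θ) := sq_sqrt (mul_pos hθ₀ hθ₁').le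
  have h₁ : 1 / √(θ * (1 - θ)) * (1 - θ) = √((1 - θ) / θ) := by
    refine ((sqrt_eq_iff_mul_self_eq_of_pos (by positivity)).2 ?_).symm
    field_simp
    rw [hs2]
  refine ⟨h₁, eq_inv_of_mul_eq_one_left ?_⟩
  rw [← h₁]
  field_simp
  rw [hs2]

def IsEllRhoSolution (θ α lam l r : ℝ) : Prop :=
  r * l = θ * (1 - exp (-(α * lam * (1 - r) * l))) ∧
    (1 - r) * l = (1 - θ) * (1 - exp (-(α * lam * r * l)))

section EllRho

variable {θ α γ lam x y l r : ℝ}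

theorem IsFixedPair.isEllRhoSolution (hαγ : α * (1 - θ) = γ) (hαγ' : α * θ = γ⁻¹)
    (h : IsFixedPair (lam * γ) (lam * γ⁻¹) x y) (h₁ : r * l = θ * (1 - x))
    (h₂ : (1 - r) * l = (1 - θ) * (1 - y)) : IsEllRhoSolution θ α lam l r := by
  constructor
  · rw [h₁, show -(α * lam * (1 - r) * l) = lam * γ * (y - 1) by
      linear_combination (-(α * lam)) * h₂ - lam * (1 - y) * hαγ, ← h.2.2.1]
  · rw [h₂, show -(α * lam * r * l) = lam * γ⁻¹ * (x - 1) by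
      linear_combination (-(α * lam)) * h₁ - lam * (1 - x) * hαγ', ← h.2.2.2]

theorem IsEllRhoSolution.isFixedPair (hθ : θ < 1) (hαγ : α * (1 - θ) = γ)
    (hαγ' : α * θ = γ⁻¹) (hαlam : 0 < α * lam) (hl : 0 < l) (hr : 0 < r)
    (h : IsEllRhoSolution θ α lam l r) :
    IsFixedPair (lam * γ) (lam * γ⁻¹) (exp (-(α * lam * (1 - r) * l)))
      (exp (-(α * lam * r * l))) := by
  have hy : exp (-(α * lam * r * l)) < 1 := exp_lt_one_iff.2 (by nlinarith [mul_pos hαlam hr])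
  have hr₁ : 0 < 1 - r := by
    have : 0 < (1 - r) * l := h.2 ▸ mul_pos (sub_pos.2 hθ) (sub_pos.2 hy)
    exact pos_of_mul_pos_left this hl.le
  refine ⟨⟨exp_pos _, exp_lt_one_iff.2 ?_⟩, ⟨exp_pos _, hy⟩, ?_, ?_⟩
  · nlinarith [mul_pos (mul_pos hαlam hr₁) hl]
  · congr 1
    linear_combination (-(α * lam)) * h.2 - lam * (1 - exp (-(α * lam * r * l))) * hαγ
  · congr 1
    linear_combination (-(α * lam)) * h.1 - lam * (1 - exp (-(α * lam * (1 - r) * l))) * hαγ'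

theorem IsFixedPair.ellRho_spec (hθ : θ ∈ Ioo 0 1) (hαγ : α * (1 - θ) = γ)
    (hαγ' : α * θ = γ⁻¹) (h : IsFixedPair (lam * γ) (lam * γ⁻¹) x y)
    (hl : l = θ * (1 - x) + (1 - θ) * (1 - y)) (hr : r = θ * (1 - x) / l) :
    IsEllRhoSolution θ α lam l r ∧
      (∀ l' r', 0 < l' → 0 < r' → IsEllRhoSolution θ α lam l' r' → l' = l ∧ r' = r) ∧
      l ∈ Ioo 0 1 ∧ r ∈ Ioo 0 1 := by
  have ⟨⟨hx₀, hx₁⟩, ⟨hy₀, hy₁⟩, _⟩ := h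
  obtain ⟨hθ₀, hθ₁⟩ := hθ
  have hl₀ : 0 < l := by rw [hl]; nlinarith
  have h₁ : r * l = θ * (1 - x) := by rw [hr, div_mul_cancel₀ _ hl₀.ne']
  have h₂ : (1 - r) * l = (1 - θ) * (1 - y) := by linear_combination hl - h₁
  have hαlam : 0 < α * lam := by
    have := h.pos_left
    rw [← hαγ] at this
    nlinarith
  refine ⟨h.isEllRhoSolution hαγ hαγ' h₁ h₂, fun l' r' hl' hr' h' => ?_,
    ⟨hl₀, by rw [hl]; nlinarith⟩,
    ⟨by rw [hr]; exact div_pos (by nlinarith) hl₀, by rw [hr, div_lt_one hl₀, hl]; nlinarith⟩⟩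
  obtain ⟨hx', hy'⟩ := h.unique (h'.isFixedPair hθ₁ hαγ hαγ' hαlam hl' hr')
  have h₁' : r' * l' = r * l := by rw [h'.1, hx', h₁]
  have h₂' : (1 - r') * l' = (1 - r) * l := by rw [h'.2, hy', h₂]
  have hll' : l' = l := by linear_combination h₁' + h₂'
  exact ⟨hll', mul_right_cancel₀ hl₀.ne' (hll' ▸ h₁')⟩

end EllRho

theorem IsFixedPairFamily.tendsto_share_nhdsGT_one {γ θ : ℝ} {q₁ q₂ : ℝ → ℝ}
    (h : IsFixedPairFamily γ q₁ q₂) (hθ : θ ∈ Ioo 0 1) (hθγ : (1 - θ) * γ⁻¹ = θ * γ) :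
    Tendsto (fun lam => θ * (1 - q₁ lam) / (θ * (1 - q₁ lam) + (1 - θ) * (1 - q₂ lam)))
      (𝓝[>] 1) (𝓝 (1 + γ)⁻¹) := by
  have hθγ₀ : θ + θ * γ ≠ 0 := by nlinarith [h.pos, hθ.1]
  have hlim : Tendsto (fun lam => θ / (θ + (1 - θ) * ((1 - q₂ lam) / (1 - q₁ lam))))
      (𝓝[>] 1) (𝓝 (θ / (θ + (1 - θ) * γ⁻¹))) :=
    tendsto_const_nhds.div
      (tendsto_const_nhds.add (tendsto_const_nhds.mul h.tendsto_one_sub_div_one_sub))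
      (hθγ ▸ hθγ₀)
  rw [hθγ, show θ / (θ + θ * γ) = (1 + γ)⁻¹ by field_simp [hθ.1.ne']] at hlim
  refine hlim.congr' ?_
  filter_upwards [self_mem_nhdsWithin] with lam hlam
  have hq₁ : 1 - q₁ lam ≠ 0 := sub_ne_zero.2 (h lam hlam).1.2.ne'
  field_simp

theorem statement_8_general (θ : ℝ) (hθ : θ ∈ Set.Ioo (0:ℝ) 1)
    (γ α : ℝ) (hγ : γ = Real.sqrt ((1 - θ) / θ)) (hα : α = 1 / Real.sqrt (θ * (1 - θ)))
    (q₁ q₂ : ℝ → ℝ)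
    (hsol : ∀ lam, 1 < lam →
      q₁ lam ∈ Set.Ioo (0:ℝ) 1 ∧ q₂ lam ∈ Set.Ioo (0:ℝ) 1 ∧
      q₁ lam = Real.exp (lam * γ * (q₂ lam - 1)) ∧
      q₂ lam = Real.exp (lam * γ⁻¹ * (q₁ lam - 1)))
    (ℓ ρ : ℝ → ℝ)
    (hℓ : ∀ lam, ℓ lam = θ * (1 - q₁ lam) + (1 - θ) * (1 - q₂ lam))
    (hρ : ∀ lam, ρ lam = θ * (1 - q₁ lam) / ℓ lam) :
    -- (i)
    (∀ lam, 1 < lam →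
      (ρ lam * ℓ lam = θ * (1 - Real.exp (-(α * lam * (1 - ρ lam) * ℓ lam))) ∧
       (1 - ρ lam) * ℓ lam = (1 - θ) * (1 - Real.exp (-(α * lam * ρ lam * ℓ lam)))) ∧
      (∀ l r : ℝ, 0 < l → 0 < r →
        r * l = θ * (1 - Real.exp (-(α * lam * (1 - r) * l))) →
        (1 - r) * l = (1 - θ) * (1 - Real.exp (-(α * lam * r * l))) →
        l = ℓ lam ∧ r = ρ lam) ∧
      ℓ lam ∈ Set.Ioo (0:ℝ) 1 ∧ ρ lam ∈ Set.Ioo (0:ℝ) 1) ∧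
    -- (ii)
    ((∀ lam ∈ Set.Ioi (1:ℝ), DifferentiableAt ℝ ℓ lam) ∧
     StrictMonoOn ℓ (Set.Ioi 1) ∧
     Tendsto ℓ (nhdsWithin 1 (Set.Ioi 1)) (nhds 0) ∧
     Tendsto ℓ atTop (nhds 1) ∧
     Set.BijOn ℓ (Set.Ioi 1) (Set.Ioo 0 1)) ∧
    -- (iii)
    Tendsto ρ (nhdsWithin 1 (Set.Ioi 1)) (nhds (1 + γ)⁻¹) := by
  have hq : IsFixedPairFamily γ q₁ q₂ := hsol
  obtain ⟨hαγ, hαγ'⟩ : α * (1 - θ) = γ ∧ α * θ = γ⁻¹ := hα ▸ hγ ▸ one_div_sqrt_mul_eq hθ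
  have hℓfun : ℓ = fun lam => θ * (1 - q₁ lam) + (1 - θ) * (1 - q₂ lam) := funext hℓ
  have hdiff : ∀ lam ∈ Ioi (1:ℝ), DifferentiableAt ℝ ℓ lam := fun lam hlam =>
    hℓfun ▸ (((hq.differentiableAt hlam).const_sub 1).const_mul θ).add
      (((hq.swap.differentiableAt hlam).const_sub 1).const_mul (1 - θ))
  have hmono : StrictMonoOn ℓ (Ioi 1) := fun a ha b hb hab => by
    have h₁ := hq.strictAntiOn ha hb hab
    have h₂ := hq.swap.strictAntiOn ha hb hab
    rw [hℓ, hℓ]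
    nlinarith [hθ.1, hθ.2]
  have hℓ₁ : Tendsto ℓ (𝓝[>] 1) (𝓝 0) := by
    simpa [hℓfun] using ((hq.tendsto_nhdsGT_one.const_sub 1).const_mul θ).add
      ((hq.swap.tendsto_nhdsGT_one.const_sub 1).const_mul (1 - θ))
  have hℓtop : Tendsto ℓ atTop (𝓝 1) := by
    simpa [hℓfun] using ((hq.tendsto_atTop.const_sub 1).const_mul θ).add
      ((hq.swap.tendsto_atTop.const_sub 1).const_mul (1 - θ))
  refine ⟨fun lam hlam => ?_, ⟨hdiff, hmono, hℓ₁, hℓtop, hmono.bijOn_Ioi_Ioo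
    (fun x hx => (hdiff x hx).continuousAt.continuousWithinAt) hℓ₁ hℓtop⟩, ?_⟩
  · obtain ⟨hsys, huniq, hℓ01, hρ01⟩ :=
      (hq lam hlam).ellRho_spec hθ hαγ hαγ' (hℓ lam) (hρ lam)
    exact ⟨hsys, fun l r hl hr h₁ h₂ => huniq l r hl hr ⟨h₁, h₂⟩, hℓ01, hρ01⟩
  · exact (hq.tendsto_share_nhdsGT_one hθ (by linear_combination θ * hαγ - (1 - θ) * hαγ')).congr
      fun lam => by rw [hρ, hℓ]

/-- Lemma `lem: solv`: with `γ_θ = √((1−θ)/θ)`, `α_θ = (θ(1−θ))^{−1/2}`,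
`(q₁(λ), q₂(λ))` the unique solution in `(0,1)²` of the fixed-point system, and
`ℓ(λ) = θ(1−q₁(λ)) + (1−θ)(1−q₂(λ))`, `ρ(λ) = θ(1−q₁(λ))/ℓ(λ)`:
(i) for each `λ > 1`, `(ℓ(λ), ρ(λ))` is the unique solution in `(0,∞)²` of the system
`ρℓ = θ(1 − e^{−α_θ λ (1−ρ)ℓ})`, `(1−ρ)ℓ = (1−θ)(1 − e^{−α_θ λ ρ ℓ})`, and
`ℓ(λ), ρ(λ) ∈ (0,1)`; (ii) `ℓ` is differentiable and strictly increasing on `(1,∞)` with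
`ℓ(1+) = 0` and `ℓ(∞) = 1`, hence a bijection from `(1,∞)` to `(0,1)`;
(iii) `ρ(λ) → (1+γ_θ)⁻¹` as `λ → 1+`. -/
theorem statement_8 (θ : ℝ) (hθ : θ ∈ Set.Ioo (0:ℝ) 1)
    (γ α : ℝ) (hγ : γ = Real.sqrt ((1 - θ) / θ)) (hα : α = 1 / Real.sqrt (θ * (1 - θ)))
    (q₁ q₂ : ℝ → ℝ)
    (hsol : ∀ lam, 1 < lam →
      q₁ lam ∈ Set.Ioo (0:ℝ) 1 ∧ q₂ lam ∈ Set.Ioo (0:ℝ) 1 ∧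
      q₁ lam = Real.exp (lam * γ * (q₂ lam - 1)) ∧
      q₂ lam = Real.exp (lam * γ⁻¹ * (q₁ lam - 1)))
    (huniq : ∀ lam, 1 < lam → ∀ x y : ℝ, x ∈ Set.Ioo (0:ℝ) 1 → y ∈ Set.Ioo (0:ℝ) 1 →
      x = Real.exp (lam * γ * (y - 1)) → y = Real.exp (lam * γ⁻¹ * (x - 1)) →
      x = q₁ lam ∧ y = q₂ lam)
    (ℓ ρ : ℝ → ℝ)
    (hℓ : ∀ lam, ℓ lam = θ * (1 - q₁ lam) + (1 - θ) * (1 - q₂ lam))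
    (hρ : ∀ lam, ρ lam = θ * (1 - q₁ lam) / ℓ lam) :
    -- (i)
    (∀ lam, 1 < lam →
      (ρ lam * ℓ lam = θ * (1 - Real.exp (-(α * lam * (1 - ρ lam) * ℓ lam))) ∧
       (1 - ρ lam) * ℓ lam = (1 - θ) * (1 - Real.exp (-(α * lam * ρ lam * ℓ lam)))) ∧
      (∀ l r : ℝ, 0 < l → 0 < r →
        r * l = θ * (1 - Real.exp (-(α * lam * (1 - r) * l))) →
        (1 - r) * l = (1 - θ) * (1 - Real.exp (-(α * lam * r * l))) →
        l = ℓ lam ∧ r = ρ lam) ∧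
      ℓ lam ∈ Set.Ioo (0:ℝ) 1 ∧ ρ lam ∈ Set.Ioo (0:ℝ) 1) ∧
    -- (ii)
    ((∀ lam ∈ Set.Ioi (1:ℝ), DifferentiableAt ℝ ℓ lam) ∧
     StrictMonoOn ℓ (Set.Ioi 1) ∧
     Tendsto ℓ (nhdsWithin 1 (Set.Ioi 1)) (nhds 0) ∧
     Tendsto ℓ atTop (nhds 1) ∧
     Set.BijOn ℓ (Set.Ioi 1) (Set.Ioo 0 1)) ∧
    -- (iii)
    Tendsto ρ (nhdsWithin 1 (Set.Ioi 1)) (nhds (1 + γ)⁻¹) :=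
  statement_8_general θ hθ γ α hγ hα q₁ q₂ hsol ℓ ρ hℓ hρ
end
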